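/- arXiv:2206.06815 — 7 statements merged into one kernel-verified Lean document; each statement's English description precedes it below -/
import Mathlib

section
/- Every automorphism of a finite projective plane fixes equally many points as lines: if (σ, τ) is an automorphism of a finite projective plane, then the number of points p with σ(p) = p equals the number of lines M with τ(M) = M. -/
/-- A point-line incidence relation `I` is a projective plane if any two distinct
points lie on a unique common line, any two distinct lines meet in a unique point,
and there exist four points no three of which are incident with a common line. -/
structure IsProjectivePlane {P L : Type*} (I : P → L → Prop) : Prop where
  line_unique : ∀ p q : P, p ≠ q → ∃! M : L, I p M ∧ I q M
  point_unique : ∀ M N : L, M ≠ N → ∃! p : P, I p M ∧ I p N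
  nondeg : ∃ a b c d : P, a ≠ b ∧ a ≠ c ∧ a ≠ d ∧ b ≠ c ∧ b ≠ d ∧ c ≠ d ∧
    ∀ M : L, ¬(I a M ∧ I b M ∧ I c M) ∧ ¬(I a M ∧ I b M ∧ I d M) ∧
      ¬(I a M ∧ I c M ∧ I d M) ∧ ¬(I b M ∧ I c M ∧ I d M)

open Matrix in
/-- Every automorphism of a finite projective plane fixes equally many points as lines. -/
theorem fixed_points_eq_fixed_lines {P L : Type*} [Finite P] [Finite L]
    (I : P → L → Prop) (hplane : IsProjectivePlane I)
    (σ : Equiv.Perm P) (τ : Equiv.Perm L)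
    (haut : ∀ p M, I p M ↔ I (σ p) (τ M)) :
    Nat.card {p : P // σ p = p} = Nat.card {M : L // τ M = M} := by
  classical
  obtain ⟨a, b, c, d, hab, hac, had, hbc, hbd, hcd, hq⟩ := hplane.nondeg
  letI : Membership P L := ⟨fun M p => I p M⟩
  -- named lines of the quadrangle
  let line : ∀ {p q : P}, p ≠ q → L := fun {p q} h => (hplane.line_unique p q h).choose
  have hline : ∀ {p q : P} (h : p ≠ q), I p (line h) ∧ I q (line h) :=
    fun {p q} h => (hplane.line_unique p q h).choose_spec.1
  haveI PP : Configuration.ProjectivePlane P L :=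
  { exists_point := by
      intro l
      by_contra h
      push_neg at h
      exact (hq l).1 ⟨h a, h b, h c⟩
    exists_line := by
      intro p
      by_cases h1 : I p (line hab)
      · by_cases h2 : I p (line hac)
        · have hne : line hab ≠ line hac := by
            intro hEq
            exact (hq (line hab)).1 ⟨(hline hab).1, (hline hab).2, hEq ▸ (hline hac).2⟩
          have hpa : p = a :=
            (hplane.point_unique _ _ hne).unique ⟨h1, h2⟩ ⟨(hline hab).1, (hline hac).1⟩
          refine ⟨line hcd, fun h3 => ?_⟩
          exact (hq (line hcd)).2.2.1 ⟨hpa ▸ h3, (hline hcd).1, (hline hcd).2⟩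
        · exact ⟨line hac, h2⟩
      · exact ⟨line hab, h1⟩
    eq_or_eq := by
      intro p₁ p₂ l₁ l₂ h1 h2 h3 h4
      by_cases hp : p₁ = p₂
      · exact Or.inl hp
      · exact Or.inr ((hplane.line_unique p₁ p₂ hp).unique ⟨h1, h2⟩ ⟨h3, h4⟩)
    mkPoint := fun {l₁ l₂} h => (hplane.point_unique l₁ l₂ h).choose
    mkPoint_ax := fun {l₁ l₂} h => (hplane.point_unique l₁ l₂ h).choose_spec.1
    mkLine := fun {p q} h => line h
    mkLine_ax := fun {p q} h => hline h
    exists_config := by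
      refine ⟨a, c, d, line hab, line hcd, line hbc, ?_, ?_, ?_, ?_, ?_, ?_, ?_, ?_⟩
      · exact fun h => (hq (line hcd)).2.2.1 ⟨h, (hline hcd).1, (hline hcd).2⟩
      · exact fun h => (hq (line hbc)).1 ⟨h, (hline hbc).1, (hline hbc).2⟩
      · exact fun h => (hq (line hab)).1 ⟨(hline hab).1, (hline hab).2, h⟩
      · exact (hline hcd).1
      · exact (hline hbc).2
      · exact fun h => (hq (line hab)).2.1 ⟨(hline hab).1, (hline hab).2, h⟩
      · exact (hline hcd).2
      · exact fun h => (hq (line hbc)).2.2.2 ⟨(hline hbc).1, (hline hbc).2, h⟩ }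
  letI : Fintype P := Fintype.ofFinite P
  letI : Fintype L := Fintype.ofFinite L
  have hcard : Fintype.card P = Fintype.card L :=
    Configuration.ProjectivePlane.card_points_eq_card_lines P L
  let e : P ≃ L := Fintype.equivOfCardEq hcard
  set N : ℕ := Configuration.ProjectivePlane.order P L with hNdef
  have hN : 1 < N := Configuration.ProjectivePlane.one_lt_order P L
  have hNQ : (N : ℚ) ≠ 0 := Nat.cast_ne_zero.2 (by omega)
  have hlc : ∀ p : P, Nat.card {l : L // I p l} = N + 1 := fun p =>
    Configuration.ProjectivePlane.lineCount_eq L p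
  -- the incidence matrix
  let A : Matrix P P ℚ := Matrix.of fun p q => if I p (e q) then 1 else 0
  have hentry : ∀ p q j : P, A p j * A q j = if I p (e j) ∧ I q (e j) then 1 else 0 := by
    intro p q j
    by_cases h1 : I p (e j) <;> by_cases h2 : I q (e j) <;>
      simp [A, h1, h2]
  have hcr : ∀ p q : P,
      (Matrix.replicateCol Unit (fun _ : P => (N : ℚ)⁻¹) * Matrix.replicateRow Unit (fun _ : P => (1:ℚ))) p q
        = (N : ℚ)⁻¹ := by
    intro p q
    simp [Matrix.mul_apply]
  have hB : A * Aᵀ =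
      (N : ℚ) • (1 + Matrix.replicateCol Unit (fun _ : P => (N : ℚ)⁻¹)
        * Matrix.replicateRow Unit (fun _ : P => (1:ℚ))) := by
    ext p q
    rw [Matrix.mul_apply]
    simp only [Matrix.transpose_apply]
    rw [Finset.sum_congr rfl fun j _ => hentry p q j]
    rw [Matrix.smul_apply, Matrix.add_apply, hcr, smul_eq_mul, mul_add,
      mul_inv_cancel₀ hNQ]
    by_cases hpq : p = q
    · subst hpq
      have h1 : ∀ j : P, (if I p (e j) ∧ I p (e j) then (1:ℚ) else 0)
          = if I p (e j) then 1 else 0 := by intro j; by_cases h : I p (e j) <;> simp [h]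
      rw [Finset.sum_congr rfl fun j _ => h1 j, Finset.sum_boole]
      have h2 : (Finset.univ.filter fun j => I p (e j)).card = N + 1 := by
        rw [← Fintype.card_subtype]
        rw [← hlc p, Nat.card_eq_fintype_card]
        exact Fintype.card_congr (e.subtypeEquiv fun j => Iff.rfl)
      rw [h2, Matrix.one_apply_eq]
      push_cast
      ring
    · obtain ⟨M, hM, hMu⟩ := hplane.line_unique p q hpq
      have h1 : ∀ j : P, (if I p (e j) ∧ I q (e j) then (1:ℚ) else 0)
          = if j = e.symm M then 1 else 0 := by
        intro j
        congr 1
        simp only [eq_iff_iff]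
        constructor
        · intro h
          have := hMu (e j) h
          rw [← this]; simp
        · intro h; subst h; simpa using hM
      rw [Finset.sum_congr rfl fun j _ => h1 j, Finset.sum_ite_eq' Finset.univ (e.symm M)]
      rw [Matrix.one_apply_ne hpq]
      simp
  -- the incidence matrix is invertible
  have hdetB : (A * Aᵀ).det ≠ 0 := by
    rw [hB, Matrix.det_smul, Matrix.det_one_add_replicateCol_mul_replicateRow]
    have h1 : (fun _ : P => (1:ℚ)) ⬝ᵥ (fun _ : P => (N : ℚ)⁻¹)
        = (Fintype.card P : ℚ) * (N : ℚ)⁻¹ := by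
      simp [dotProduct, Finset.sum_const, Finset.card_univ]
    rw [h1]
    have hN0 : (0:ℚ) < (N : ℚ) := by positivity
    have : (0:ℚ) < 1 + (Fintype.card P : ℚ) * (N : ℚ)⁻¹ := by positivity
    positivity
  have hdetA : IsUnit A.det := by
    rw [Matrix.det_mul, Matrix.det_transpose] at hdetB
    exact isUnit_iff_ne_zero.2 fun h => hdetB (by rw [h, zero_mul])
  -- the conjugated line permutation
  let τ' : Equiv.Perm P := (e.trans τ).trans e.symm
  have key : σ.toPEquiv.toMatrix * A = A * τ'.toPEquiv.toMatrix := by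
    rw [PEquiv.toMatrix_toPEquiv_mul, PEquiv.mul_toMatrix_toPEquiv]
    ext p q
    have hτ' : τ'.symm q = e.symm (τ.symm (e q)) := rfl
    simp only [Matrix.submatrix_apply, id, hτ', A, Matrix.of_apply, Equiv.apply_symm_apply]
    congr 1
    simp only [eq_iff_iff]
    rw [haut p (τ.symm (e q)), Equiv.apply_symm_apply]
  -- traces agree
  have htr : Matrix.trace (σ.toPEquiv.toMatrix : Matrix P P ℚ)
      = Matrix.trace (τ'.toPEquiv.toMatrix : Matrix P P ℚ) := by
    have h1 : (τ'.toPEquiv.toMatrix : Matrix P P ℚ)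
        = A⁻¹ * (σ.toPEquiv.toMatrix * A) := by
      rw [key, Matrix.nonsing_inv_mul_cancel_left _ _ hdetA]
    rw [h1, Matrix.trace_mul_comm, Matrix.mul_assoc, Matrix.mul_nonsing_inv _ hdetA,
      Matrix.mul_one]
  have htrσ : Matrix.trace (σ.toPEquiv.toMatrix : Matrix P P ℚ)
      = ((Function.fixedPoints σ).ncard : ℚ) := Matrix.trace_permutation σ
  have htrτ : Matrix.trace (τ'.toPEquiv.toMatrix : Matrix P P ℚ)
      = ((Function.fixedPoints τ').ncard : ℚ) := Matrix.trace_permutation τ'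
  have hnat : (Function.fixedPoints σ).ncard = (Function.fixedPoints τ').ncard := by
    have := htrσ ▸ htrτ ▸ htr
    exact_mod_cast this
  have hfixσ : Nat.card {p : P // σ p = p} = (Function.fixedPoints σ).ncard := by
    rw [← Nat.card_coe_set_eq]
    exact Nat.card_congr (Equiv.subtypeEquivRight fun p => Iff.rfl)
  have hfixτ : (Function.fixedPoints τ').ncard = Nat.card {M : L // τ M = M} := by
    rw [← Nat.card_coe_set_eq]
    refine Nat.card_congr (Equiv.subtypeEquiv e fun q => ?_)
    show e.symm (τ (e q)) = q ↔ τ (e q) = e q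
    constructor
    · intro h; conv_rhs => rw [← h]
      simp
    · intro h; rw [h]; simp
  rw [hfixσ, hnat, hfixτ]
end

section
/- If an automorphism (σ, τ) of a finite projective plane fixes at least one point, then it also fixes at least one line; that is, if there is a point p with σ(p) = p, then there is a line M with τ(M) = M. -/
/-- If an automorphism of a finite projective plane fixes at least one point,
then it also fixes at least one line. -/
theorem exists_fixed_line_of_exists_fixed_point {P L : Type*} [Finite P] [Finite L]
    (I : P → L → Prop) (hplane : IsProjectivePlane I)
    (σ : Equiv.Perm P) (τ : Equiv.Perm L)
    (haut : ∀ p M, I p M ↔ I (σ p) (τ M))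
    (hfix : ∃ p : P, σ p = p) :
    ∃ M : L, τ M = M := by
  classical
  obtain ⟨p, hp⟩ := hfix
  obtain ⟨a, b, c, d, hab, hac, had, hbc, hbd, hcd, hcol⟩ := hplane.nondeg
  -- the line through two distinct points
  have lnE : ∀ {x y : P}, x ≠ y → ∃! M : L, I x M ∧ I y M := fun h => hplane.line_unique _ _ h
  by_contra hno
  push_neg at hno
  -- any fixed point other than p would give a fixed line; so p is the unique fixed point
  have huniq : ∀ q : P, σ q = q → q = p := by
    intro q hq
    by_contra hqp
    obtain ⟨M, ⟨hqM, hpM⟩, hMu⟩ := hplane.line_unique q p hqp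
    exact hno M (hMu (τ M) ⟨hq ▸ (haut q M).mp hqM, hp ▸ (haut p M).mp hpM⟩)
  -- set up Mathlib configuration instances to get |P| = |L|
  letI : Membership P L := ⟨fun M x => I x M⟩
  haveI nd : Configuration.Nondegenerate P L := by
    refine ⟨?_, ?_, ?_⟩
    · intro l
      by_contra h
      push_neg at h
      exact (hcol l).1 ⟨h a, h b, h c⟩
    · intro x
      obtain ⟨lab, ⟨ha1, hb1⟩, hu1⟩ := hplane.line_unique a b hab
      obtain ⟨lcd, ⟨hc2, hd2⟩, hu2⟩ := hplane.line_unique c d hcd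
      obtain ⟨lac, ⟨ha3, hc3⟩, hu3⟩ := hplane.line_unique a c hac
      obtain ⟨lbd, ⟨hb4, hd4⟩, hu4⟩ := hplane.line_unique b d hbd
      by_cases h1 : I x lab
      · by_cases h2 : I x lcd
        · by_cases h3 : I x lac
          · by_cases h4 : I x lbd
            · exfalso
              have h12 : lab ≠ lcd := fun h => (hcol lab).2.2.1 ⟨ha1, h ▸ hc2, h ▸ hd2⟩
              have h13 : lab ≠ lac := fun h => (hcol lab).1 ⟨ha1, hb1, h ▸ hc3⟩
              have h24 : lcd ≠ lbd := fun h => (hcol lcd).2.2.2 ⟨h ▸ hb4, hc2, hd2⟩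
              -- x on lab and lac, a on both ⇒ x = a
              obtain ⟨y, _, hyu⟩ := hplane.point_unique lab lac h13
              have hxa : x = a := (hyu x ⟨h1, h3⟩).trans (hyu a ⟨ha1, ha3⟩).symm
              obtain ⟨z, _, hzu⟩ := hplane.point_unique lcd lbd h24
              have hxd : x = d := (hzu x ⟨h2, h4⟩).trans (hzu d ⟨hd2, hd4⟩).symm
              exact had (hxa ▸ hxd ▸ rfl)
            · exact ⟨lbd, h4⟩
          · exact ⟨lac, h3⟩
        · exact ⟨lcd, h2⟩
      · exact ⟨lab, h1⟩
    · intro p₁ p₂ l₁ l₂ h₁ h₂ h₃ h₄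
      by_cases h : p₁ = p₂
      · exact Or.inl h
      · obtain ⟨M, _, hMu⟩ := hplane.line_unique p₁ p₂ h
        exact Or.inr ((hMu l₁ ⟨h₁, h₂⟩).trans (hMu l₂ ⟨h₃, h₄⟩).symm)
  haveI hL : Configuration.HasLines P L :=
    { nd with
      mkLine := fun {x y} h => (hplane.line_unique x y h).choose
      mkLine_ax := fun {x y} h => (hplane.line_unique x y h).choose_spec.1 }
  haveI hP : Configuration.HasPoints P L :=
    { nd with
      mkPoint := fun {M N} h => (hplane.point_unique M N h).choose
      mkPoint_ax := fun {M N} h => (hplane.point_unique M N h).choose_spec.1 }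
  haveI : Fintype P := Fintype.ofFinite P
  haveI : Fintype L := Fintype.ofFinite L
  have hcard : Fintype.card P = Fintype.card L :=
    le_antisymm (Configuration.HasLines.card_le P L) (Configuration.HasPoints.card_le P L)
  -- the map sending M to the intersection point of M and τ M
  have hMτ : ∀ M : L, M ≠ τ M := fun M h => hno M h.symm
  let f : L → P := fun M => (hplane.point_unique M (τ M) (hMτ M)).choose
  have hf : ∀ M : L, I (f M) M ∧ I (f M) (τ M) :=
    fun M => (hplane.point_unique M (τ M) (hMτ M)).choose_spec.1
  have hfu : ∀ (M : L) (x : P), I x M → I x (τ M) → f M = x := by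
    intro M x h1 h2
    obtain ⟨y, hy, hyu⟩ := hplane.point_unique M (τ M) (hMτ M)
    exact (hyu _ (hf M)).trans (hyu x ⟨h1, h2⟩).symm
  -- f is surjective
  have hfsurj : Function.Surjective f := by
    intro x
    by_cases hxp : x = p
    · subst hxp
      have hq : a ≠ x ∨ b ≠ x := by
        by_cases h : a = x
        · exact Or.inr (fun h' => hab (h.trans h'.symm))
        · exact Or.inl h
      obtain ⟨q, hq⟩ : ∃ q : P, q ≠ x := hq.elim (fun h => ⟨a, h⟩) fun h => ⟨b, h⟩
      obtain ⟨M, ⟨hqM, hxM⟩, _⟩ := hplane.line_unique q x hq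
      exact ⟨M, hfu M x hxM (hp ▸ (haut x M).mp hxM)⟩
    · have hσx : σ x ≠ x := fun h => hxp (huniq x h)
      obtain ⟨N, ⟨hxN, hσxN⟩, _⟩ := hplane.line_unique x (σ x) (Ne.symm hσx)
      refine ⟨τ.symm N, hfu _ x ?_ ?_⟩
      · rw [haut x (τ.symm N), τ.apply_symm_apply]
        exact hσxN
      · rw [τ.apply_symm_apply]
        exact hxN
  have hfinj : Function.Injective f :=
    ((Fintype.bijective_iff_surjective_and_card f).mpr ⟨hfsurj, hcard.symm⟩).1
  -- two distinct lines through p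
  obtain ⟨x, y, z, hxy, hxz, hyz, hxp, hyp, hzp, hnc⟩ :
      ∃ x y z : P, x ≠ y ∧ x ≠ z ∧ y ≠ z ∧ x ≠ p ∧ y ≠ p ∧ z ≠ p ∧
        ∀ M : L, ¬(I x M ∧ I y M ∧ I z M) := by
    by_cases h1 : p = a
    · exact ⟨b, c, d, hbc, hbd, hcd, fun h => hab (h1 ▸ h.symm ▸ rfl),
        fun h => hac (h1 ▸ h.symm ▸ rfl), fun h => had (h1 ▸ h.symm ▸ rfl),
        fun M => (hcol M).2.2.2⟩
    · by_cases h2 : p = b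
      · exact ⟨a, c, d, hac, had, hcd, fun h => h1 (h ▸ rfl),
          fun h => hbc (h2 ▸ h.symm ▸ rfl), fun h => hbd (h2 ▸ h.symm ▸ rfl),
          fun M => (hcol M).2.2.1⟩
      · by_cases h3 : p = c
        · exact ⟨a, b, d, hab, had, hbd, fun h => h1 (h ▸ rfl), fun h => h2 (h ▸ rfl),
            fun h => hcd (h3 ▸ h.symm ▸ rfl), fun M => (hcol M).2.1⟩
        · exact ⟨a, b, c, hab, hac, hbc, fun h => h1 (h ▸ rfl), fun h => h2 (h ▸ rfl),
            fun h => h3 (h ▸ rfl), fun M => (hcol M).1⟩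
  obtain ⟨Mx, ⟨hpMx, hxMx⟩, _⟩ := hplane.line_unique p x (Ne.symm hxp)
  obtain ⟨My, ⟨hpMy, hyMy⟩, _⟩ := hplane.line_unique p y (Ne.symm hyp)
  obtain ⟨Mz, ⟨hpMz, hzMz⟩, _⟩ := hplane.line_unique p z (Ne.symm hzp)
  have key : ∀ M : L, I p M → f M = p := fun M h => hfu M p h (hp ▸ (haut p M).mp h)
  have hxy' : Mx ≠ My ∨ Mx ≠ Mz := by
    by_cases h : Mx = My
    · refine Or.inr fun h' => hnc Mx ⟨hxMx, h ▸ hyMy, h' ▸ hzMz⟩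
    · exact Or.inl h
  rcases hxy' with h | h
  · exact h (hfinj ((key Mx hpMx).trans (key My hpMy).symm))
  · exact h (hfinj ((key Mx hpMx).trans (key Mz hpMz).symm))
end

section
/- Let H be a group acting transitively on a nonempty set X. Then H is generated by the union of its point stabilizers H_x (x ∈ X) if and only if there is no H-invariant partition B of X with more than one block such that H acts sharply transitively on B, i.e., such that H acts transitively on the set of blocks of B and the setwise stabilizer in H of each block equals the kernel of the action of H on the set of blocks. -/
open Pointwise MulAction

/-!
Let `N` be the subgroup generated by the point stabilizers. It is normal, since conjugation
permutes the point stabilizers, and it contains the stabilizer of every point, so the setwise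
stabilizer of each `N`-orbit is exactly `N`. Hence the `N`-orbits form an invariant partition on
which `H` acts sharply transitively, with more than one block as soon as `N ≠ H`. Conversely, for
any sharply transitive block system the stabilizer of a point fixes the block containing it, hence
lies in the kernel; so `N` lies in the kernel, which is proper when there are two blocks.
-/

theorem Subgroup.normal_closure_of_conjugatesOfSet_subset {G : Type*} [Group G] {s : Set G}
    (h : Group.conjugatesOfSet s ⊆ s) : (Subgroup.closure s).Normal := by
  rw [le_antisymm (Subgroup.closure_le _ |>.2 Subgroup.subset_normalClosure)
    (Subgroup.closure_mono h)]
  infer_instance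

namespace MulAction

variable {G X : Type*} [Group G] [MulAction G X]

theorem conjugatesOfSet_iUnion_stabilizer_subset :
    Group.conjugatesOfSet (⋃ x : X, (stabilizer G x : Set G)) ⊆
      ⋃ x : X, (stabilizer G x : Set G) := by
  intro g hg
  obtain ⟨s, hs, hconj⟩ := Group.mem_conjugatesOfSet_iff.1 hg
  obtain ⟨c, rfl⟩ := isConj_iff.1 hconj
  obtain ⟨x, hx⟩ := Set.mem_iUnion.1 hs
  refine Set.mem_iUnion.2 ⟨c • x, ?_⟩
  rw [SetLike.mem_coe, stabilizer_smul_eq_stabilizer_map_conj]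
  exact ⟨s, hx, rfl⟩

instance normal_closure_iUnion_stabilizer :
    (Subgroup.closure (⋃ x : X, (stabilizer G x : Set G))).Normal :=
  Subgroup.normal_closure_of_conjugatesOfSet_subset conjugatesOfSet_iUnion_stabilizer_subset

theorem stabilizer_le_closure_iUnion_stabilizer (x : X) :
    stabilizer G x ≤ Subgroup.closure (⋃ y : X, (stabilizer G y : Set G)) :=
  fun _ hg => Subgroup.subset_closure (Set.mem_iUnion.2 ⟨x, hg⟩)

theorem smul_orbit_eq_self_iff {N : Subgroup G} (hN : ∀ x : X, stabilizer G x ≤ N) (g : G)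
    (x : X) : g • orbit N x = orbit N x ↔ g ∈ N := by
  rw [← mem_stabilizer_iff, stabilizer_orbit_eq (hN x)]

theorem isBlockSystem_of_isPartition_of_smul_mem {B : Set (Set X)} (hB : Setoid.IsPartition B)
    (hinv : ∀ g : G, ∀ b ∈ B, g • b ∈ B) : IsBlockSystem G B :=
  ⟨hB, fun b hb => isBlock_iff_smul_eq_or_disjoint.2 fun g =>
    hB.pairwiseDisjoint.eq_or_disjoint (hinv g b hb) hb⟩

theorem closure_iUnion_stabilizer_le_iInf_stabilizer {B : Set (Set X)}
    (hB : Setoid.IsPartition B) (hinv : ∀ g : G, ∀ b ∈ B, g • b ∈ B)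
    (hsharp : ∀ b ∈ B, ∀ g : G, g • b = b ↔ ∀ b' ∈ B, g • b' = b') :
    Subgroup.closure (⋃ x : X, (stabilizer G x : Set G)) ≤ ⨅ b ∈ B, stabilizer G b := by
  refine Subgroup.closure_le _ |>.2 (Set.iUnion_subset fun x g hg => ?_)
  obtain ⟨b, ⟨hb, hxb⟩, -⟩ := hB.2 x
  have hgb : g • b = b :=
    ((isBlockSystem_of_isPartition_of_smul_mem hB hinv).2 hb).stabilizer_le hxb hg
  simpa only [SetLike.mem_coe, Subgroup.mem_iInf, mem_stabilizer_iff] using (hsharp b hb g).1 hgb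

end MulAction

/-- A group `H` acting transitively on a nonempty set `X` is generated by its point
stabilizers if and only if there is no `H`-invariant partition of `X` with more
than one block on which `H` acts sharply transitively (i.e. `H` is transitive on the
blocks and the setwise stabilizer of each block equals the kernel of the action on the
blocks). -/
theorem closure_stabilizers_eq_top_iff {H X : Type*} [Group H] [MulAction H X] [Nonempty X]
    (htrans : ∀ x y : X, ∃ h : H, h • x = y) :
    Subgroup.closure (⋃ x : X, (MulAction.stabilizer H x : Set H)) = ⊤ ↔
      ¬ ∃ B : Set (Set X), Setoid.IsPartition B ∧
          (∀ g : H, ∀ b ∈ B, g • b ∈ B) ∧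
          B.Nontrivial ∧
          (∀ b₁ ∈ B, ∀ b₂ ∈ B, ∃ g : H, g • b₁ = b₂) ∧
          (∀ b ∈ B, ∀ g : H, g • b = b ↔ ∀ b' ∈ B, g • b' = b') := by
  set N := Subgroup.closure (⋃ x : X, (stabilizer H x : Set H))
  constructor
  · rintro hN ⟨B, hB, hinv, ⟨b₁, hb₁, b₂, hb₂, hne⟩, htransB, hsharp⟩
    obtain ⟨g, rfl⟩ := htransB b₁ hb₁ b₂ hb₂
    have hg := closure_iUnion_stabilizer_le_iInf_stabilizer hB hinv hsharp (hN ▸ Subgroup.mem_top g)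
    exact hne (Subgroup.mem_iInf.1 (Subgroup.mem_iInf.1 hg b₁) hb₁).symm
  · intro hno
    by_contra hNtop
    obtain ⟨h, hh⟩ : ∃ h, h ∉ N := by simpa [Subgroup.eq_top_iff'] using hNtop
    obtain ⟨x⟩ := ‹Nonempty X›
    have hN : ∀ y : X, stabilizer H y ≤ N := stabilizer_le_closure_iUnion_stabilizer
    refine hno ⟨Set.range (orbit N ·), IsPartition.of_orbits, ?_,
      ⟨_, ⟨x, rfl⟩, _, ⟨h • x, rfl⟩, ?_⟩, ?_, ?_⟩
    · rintro g _ ⟨y, rfl⟩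
      exact ⟨g • y, (smul_orbit_eq_orbit_smul N y g).symm⟩
    · intro heq
      exact hh ((smul_orbit_eq_self_iff hN h x).1 (by rw [smul_orbit_eq_orbit_smul]; exact heq.symm))
    · rintro _ ⟨y, rfl⟩ _ ⟨z, rfl⟩
      obtain ⟨g, rfl⟩ := htrans y z
      exact ⟨g, smul_orbit_eq_orbit_smul N y g⟩
    · rintro _ ⟨y, rfl⟩ g
      simp only [Set.forall_mem_range, smul_orbit_eq_self_iff hN]
      exact ⟨fun hg _ => hg, fun hg => hg y⟩
end

section
/- If H is a group acting sharply 2-transitively on a finite set X with at least two elements, then the cardinality of X is a prime power. -/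
set_option maxHeartbeats 1000000 in

/-- If a group `H` acts sharply 2-transitively on a finite set `X` with at least two
elements, then the cardinality of `X` is a prime power. -/
theorem card_isPrimePow_of_sharply_two_transitive {H X : Type*} [Group H] [MulAction H X]
    [Fintype X] (hcard : 2 ≤ Fintype.card X)
    (hsharp : ∀ a b c d : X, a ≠ b → c ≠ d → ∃! h : H, h • a = c ∧ h • b = d) :
    IsPrimePow (Fintype.card X) := by
  classical
  obtain ⟨a₀, b₀, hab⟩ := Fintype.exists_pair_of_one_lt_card
    (show 1 < Fintype.card X by omega)
  -- an element of H is determined by its action on any two distinct points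
  have key : ∀ (g g' : H) (a b : X), a ≠ b → g • a = g' • a → g • b = g' • b → g = g' := by
    intro g g' a b hne h1 h2
    have hcd : g' • a ≠ g' • b := fun e => hne (smul_left_cancel g' e)
    obtain ⟨h, -, hu⟩ := hsharp a b (g' • a) (g' • b) hne hcd
    exact (hu g ⟨h1, h2⟩).trans (hu g' ⟨rfl, rfl⟩).symm
  -- a nontrivial element fixes at most one point
  have fixone : ∀ (g : H) (a b : X), a ≠ b → g • a = a → g • b = b → g = 1 := by
    intro g a b hne h1 h2
    exact key g 1 a b hne (by simpa using h1) (by simpa using h2)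
  haveI : Fintype H := Fintype.ofInjective (fun h : H => (h • a₀, h • b₀))
    (fun g g' e => key g g' a₀ b₀ hab (congrArg Prod.fst e) (congrArg Prod.snd e))
  obtain ⟨m, hm⟩ : ∃ m, Fintype.card X = m + 2 := ⟨Fintype.card X - 2, by omega⟩
  -- |H| = n (n-1)
  have cardH : Fintype.card H = (m + 2) * (m + 1) := by
    have hbij : (Finset.univ : Finset H).card = (Finset.univ : Finset X).offDiag.card := by
      apply Finset.card_bij (fun (h : H) _ => (h • a₀, h • b₀))
      · intro h _
        simp only [Finset.mem_offDiag, Finset.mem_univ, true_and]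
        exact fun e => hab (smul_left_cancel h e)
      · intro g hg g' hg' e
        exact key g g' a₀ b₀ hab (congrArg Prod.fst e) (congrArg Prod.snd e)
      · rintro ⟨c, d⟩ hp
        rw [Finset.mem_offDiag] at hp
        obtain ⟨h, ⟨h1, h2⟩, -⟩ := hsharp a₀ b₀ c d hab hp.2.2
        exact ⟨h, Finset.mem_univ h, by simp [h1, h2]⟩
    have hoff : (Finset.univ : Finset X).offDiag.card
        = Fintype.card X * Fintype.card X - Fintype.card X := by
      rw [Finset.offDiag_card, Finset.card_univ]
    rw [← Finset.card_univ, hbij, hoff, hm]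
    exact Nat.sub_eq_of_eq_add (by ring)
  -- stabilizer of a point has n-1 elements
  have cardS : ∀ x : X, (Finset.univ.filter (fun h : H => h • x = x)).card = m + 1 := by
    intro x
    haveI : Nontrivial X := Fintype.one_lt_card_iff_nontrivial.mp (by omega)
    obtain ⟨a, hax⟩ := exists_ne x
    have hbij : (Finset.univ.filter (fun h : H => h • x = x)).card
        = (Finset.univ.erase x).card := by
      apply Finset.card_bij (fun (h : H) _ => h • a)
      · intro h hh
        rw [Finset.mem_filter] at hh
        refine Finset.mem_erase.mpr ⟨fun e => hax ?_, Finset.mem_univ _⟩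
        exact smul_left_cancel h (e.trans hh.2.symm)
      · intro g hg g' hg'
        rw [Finset.mem_filter] at hg hg'
        intro e
        exact key g g' x a (Ne.symm hax) (hg.2.trans hg'.2.symm) e
      · intro c hc
        rw [Finset.mem_erase] at hc
        obtain ⟨h, ⟨h1, h2⟩, -⟩ := hsharp x a x c (Ne.symm hax) (Ne.symm hc.1)
        exact ⟨h, Finset.mem_filter.mpr ⟨Finset.mem_univ _, h1⟩, h2⟩
    rw [hbij, Finset.card_erase_of_mem (Finset.mem_univ x), Finset.card_univ]
    omega
  -- count the elements with a fixed point
  have hdisj : ∀ x ∈ (Finset.univ : Finset X), ∀ y ∈ (Finset.univ : Finset X), x ≠ y →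
      Disjoint ((Finset.univ.filter (fun h : H => h • x = x)).erase 1)
        ((Finset.univ.filter (fun h : H => h • y = y)).erase 1) := by
    intro x _ y _ hxy
    rw [Finset.disjoint_left]
    intro h hhx hhy
    rw [Finset.mem_erase, Finset.mem_filter] at hhx hhy
    exact hhx.1 (fixone h x y hxy hhx.2.2 hhy.2.2)
  have cardB : (Finset.univ.biUnion
      (fun x : X => (Finset.univ.filter (fun h : H => h • x = x)).erase 1)).card
      = (m + 2) * m := by
    rw [Finset.card_biUnion hdisj]
    have hstep : ∀ x : X, ((Finset.univ.filter (fun h : H => h • x = x)).erase 1).card = m := by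
      intro x
      have h1S : (1 : H) ∈ Finset.univ.filter (fun h : H => h • x = x) :=
        Finset.mem_filter.mpr ⟨Finset.mem_univ _, one_smul H x⟩
      rw [Finset.card_erase_of_mem h1S, cardS x]
      omega
    rw [Finset.sum_congr rfl (fun x _ => hstep x), Finset.sum_const, Finset.card_univ, hm,
      smul_eq_mul]
  have hFixeq : Finset.univ.filter (fun h : H => ∃ x : X, h • x = x)
      = insert 1 (Finset.univ.biUnion
        (fun x : X => (Finset.univ.filter (fun h : H => h • x = x)).erase 1)) := by
    ext h
    rw [Finset.mem_filter, Finset.mem_insert]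
    constructor
    · rintro ⟨-, x, hx⟩
      by_cases h1 : h = 1
      · exact Or.inl h1
      · exact Or.inr (Finset.mem_biUnion.mpr ⟨x, Finset.mem_univ x,
          Finset.mem_erase.mpr ⟨h1, Finset.mem_filter.mpr ⟨Finset.mem_univ _, hx⟩⟩⟩)
    · rintro (rfl | hmem)
      · exact ⟨Finset.mem_univ _, a₀, one_smul H a₀⟩
      · obtain ⟨x, -, hx⟩ := Finset.mem_biUnion.mp hmem
        exact ⟨Finset.mem_univ _, x, (Finset.mem_filter.mp (Finset.mem_erase.mp hx).2).2⟩
  have h1nB : (1 : H) ∉ Finset.univ.biUnion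
      (fun x : X => (Finset.univ.filter (fun h : H => h • x = x)).erase 1) := by
    simp
  have cardFix : (Finset.univ.filter (fun h : H => ∃ x : X, h • x = x)).card
      = 1 + (m + 2) * m := by
    rw [hFixeq, Finset.card_insert_of_notMem h1nB, cardB]
    omega
  -- the set of fixed-point-free elements has n-1 elements
  set F : Finset H := Finset.univ.filter (fun h : H => ¬ ∃ x : X, h • x = x) with hF
  have cardF : F.card = m + 1 := by
    have hsum := Finset.card_filter_add_card_filter_not
      (s := (Finset.univ : Finset H)) (p := fun h : H => ∃ x : X, h • x = x)
    rw [Finset.card_univ, cardH, cardFix] at hsum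
    have hexp : (m + 2) * (m + 1) = (m + 2) * m + (m + 2) := by ring
    rw [← hF] at hsum
    linarith [hsum, hexp]
  -- pick a fixed-point-free element t
  obtain ⟨t, htF⟩ := Finset.card_pos.mp (show 0 < F.card by omega)
  have htfpf : ∀ x : X, t • x ≠ x := by
    have := (Finset.mem_filter.mp htF).2
    push_neg at this
    exact this
  have ht1 : t ≠ 1 := fun e => htfpf a₀ (by rw [e, one_smul])
  -- anything commuting with t is 1 or fixed-point-free
  have commfpf : ∀ g : H, g * t = t * g → g ≠ 1 → ∀ x : X, g • x ≠ x := by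
    intro g hg hg1 x hx
    apply hg1
    refine fixone g x (t • x) (Ne.symm (htfpf x)) hx ?_
    calc g • t • x = (g * t) • x := (mul_smul g t x).symm
      _ = (t * g) • x := by rw [hg]
      _ = t • g • x := mul_smul t g x
      _ = t • x := by rw [hx]
  -- conjugates of t are fixed-point-free, hence F contains the conjugacy class of t
  have conjF : ∀ g : H, IsConj t g → g ∈ F := by
    intro g hg
    obtain ⟨c, hc⟩ := isConj_iff.mp hg
    rw [hF, Finset.mem_filter]
    refine ⟨Finset.mem_univ _, ?_⟩
    rintro ⟨x, hx⟩
    subst hc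
    have h2 : (c⁻¹ * (c * t * c⁻¹)) • x = c⁻¹ • x := by rw [mul_smul, hx]
    have h3 : c⁻¹ * (c * t * c⁻¹) = t * c⁻¹ := by group
    rw [h3, mul_smul] at h2
    exact htfpf _ h2
  -- set up the conjugation action
  haveI : Fintype (ConjAct H) := ‹Fintype H›
  haveI : Fintype ↥(MulAction.orbit (ConjAct H) t) := Fintype.ofFinite _
  haveI : Fintype ↥(MulAction.stabilizer (ConjAct H) t) := Fintype.ofFinite _
  -- elements of the stabilizer (centralizer of t) commute with t
  have stabcomm : ∀ c : ConjAct H, c ∈ MulAction.stabilizer (ConjAct H) t →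
      (ConjAct.ofConjAct c) * t = t * (ConjAct.ofConjAct c) := by
    intro c hc
    have h : c • t = t := hc
    rw [ConjAct.smul_def] at h
    exact mul_inv_eq_iff_eq_mul.mp h
  -- the stabilizer has at most n elements
  have cardstab_le : Fintype.card ↥(MulAction.stabilizer (ConjAct H) t) ≤ m + 2 := by
    have hinj : Function.Injective
        (fun c : ↥(MulAction.stabilizer (ConjAct H) t) =>
          (ConjAct.ofConjAct (c : ConjAct H)) • a₀) := by
      intro c c' e
      simp only at e
      set g := (ConjAct.ofConjAct (c : ConjAct H))⁻¹ * ConjAct.ofConjAct (c' : ConjAct H) with hg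
      have hgfix : g • a₀ = a₀ := by
        rw [hg, mul_smul, ← e, ← mul_smul, inv_mul_cancel, one_smul]
      have hc1 : Commute (ConjAct.ofConjAct (c : ConjAct H)) t := stabcomm _ c.2
      have hc2 : Commute (ConjAct.ofConjAct (c' : ConjAct H)) t := stabcomm _ c'.2
      have hgcomm : g * t = t * g := hc1.inv_left.mul_left hc2
      have hg1 : g = 1 := by
        by_contra hne
        exact commfpf g hgcomm hne a₀ hgfix
      have heq : ConjAct.ofConjAct (c : ConjAct H) = ConjAct.ofConjAct (c' : ConjAct H) := by
        rw [hg] at hg1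
        rw [← inv_mul_eq_one]
        exact hg1
      exact Subtype.ext (ConjAct.ofConjAct.injective heq)
    calc Fintype.card ↥(MulAction.stabilizer (ConjAct H) t) ≤ Fintype.card X :=
        Fintype.card_le_of_injective _ hinj
      _ = m + 2 := hm
  -- the orbit (conjugacy class) is contained in F
  have orbit_sub : (MulAction.orbit (ConjAct H) t).toFinset ⊆ F := by
    intro g hg
    rw [Set.mem_toFinset] at hg
    exact conjF g (ConjAct.mem_orbit_conjAct.mp hg).symm
  have cardorbit_le : Fintype.card ↥(MulAction.orbit (ConjAct H) t) ≤ m + 1 := by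
    rw [← Set.toFinset_card]
    calc (MulAction.orbit (ConjAct H) t).toFinset.card ≤ F.card :=
        Finset.card_le_card orbit_sub
      _ = m + 1 := cardF
  -- orbit-stabilizer
  have hos := MulAction.card_orbit_mul_card_stabilizer_eq_card_group (ConjAct H) t
  have cardConj : Fintype.card (ConjAct H) = (m + 2) * (m + 1) := by
    rw [Fintype.card_congr ConjAct.ofConjAct.toEquiv, cardH]
  rw [cardConj] at hos
  -- conclude cards are exactly n and n-1
  have cardstab : Fintype.card ↥(MulAction.stabilizer (ConjAct H) t) = m + 2 := by
    nlinarith [hos, cardstab_le, cardorbit_le]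
  have cardorbit : Fintype.card ↥(MulAction.orbit (ConjAct H) t) = m + 1 := by
    nlinarith [hos, cardstab_le, cardorbit_le]
  -- the orbit is exactly F : all fixed-point-free elements are conjugate to t
  have orbit_eq : (MulAction.orbit (ConjAct H) t).toFinset = F := by
    apply Finset.eq_of_subset_of_card_le orbit_sub
    rw [cardF, ← cardorbit, Set.toFinset_card]
  have F_conj : ∀ g ∈ F, orderOf g = orderOf t := by
    intro g hg
    rw [← orbit_eq, Set.mem_toFinset] at hg
    obtain ⟨c, hc⟩ := (ConjAct.mem_orbit_conjAct.mp hg).symm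
    exact (SemiconjBy.orderOf_eq _ hc).symm
  -- the common order q of fixed-point-free elements is prime
  set q := orderOf t with hq
  have hq0 : q ≠ 0 := (orderOf_pos t).ne'
  have hq1 : q ≠ 1 := fun e => ht1 (orderOf_eq_one_iff.mp e)
  have hqprime : Nat.Prime q := by
    set p := q.minFac with hp
    have hpp : p.Prime := Nat.minFac_prime hq1
    set s := t ^ (q / p) with hs
    have hords : orderOf s = p := orderOf_pow_orderOf_div hq0 (Nat.minFac_dvd q)
    have hs1 : s ≠ 1 := fun e => hpp.one_lt.ne' (by rw [← hords, e, orderOf_one])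
    have hscomm : s * t = t * s := ((Commute.refl t).pow_left (q / p))
    have hsF : s ∈ F := by
      rw [hF, Finset.mem_filter]
      refine ⟨Finset.mem_univ _, ?_⟩
      rintro ⟨x, hx⟩
      exact commfpf s hscomm hs1 x hx
    have h4 := F_conj s hsF
    rw [hords] at h4
    exact h4 ▸ hpp
  -- every prime dividing n equals q, by Cauchy in the stabilizer (order n)
  have hunique : ∀ {d : ℕ}, Nat.Prime d → d ∣ Fintype.card X → d = q := by
    intro r hr hrd
    haveI : Fact r.Prime := ⟨hr⟩
    rw [hm, ← cardstab] at hrd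
    obtain ⟨c, hc⟩ := exists_prime_orderOf_dvd_card r hrd
    set g := ConjAct.ofConjAct (c : ConjAct H) with hg
    have hordg : orderOf g = r := by
      have e1 : orderOf g = orderOf (c : ConjAct H) :=
        orderOf_injective ConjAct.ofConjAct.toMonoidHom (MulEquiv.injective _) _
      have e2 : orderOf ((c : ConjAct H)) = orderOf c := Subgroup.orderOf_coe c
      rw [e1, e2, hc]
    have hg1 : g ≠ 1 := fun e => hr.one_lt.ne' (by rw [← hordg, e, orderOf_one])
    have hgcomm : g * t = t * g := stabcomm _ c.2
    have hgF : g ∈ F := by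
      rw [hF, Finset.mem_filter]
      refine ⟨Finset.mem_univ _, ?_⟩
      rintro ⟨x, hx⟩
      exact commfpf g hgcomm hg1 x hx
    rw [← hordg, F_conj g hgF]
  -- conclude
  have hpow := Nat.eq_prime_pow_of_unique_prime_dvd
    (show Fintype.card X ≠ 0 by omega) hunique
  have hlen : (Fintype.card X).primeFactorsList.length ≠ 0 := by
    intro h0
    rw [h0, pow_zero] at hpow
    omega
  exact ⟨q, (Fintype.card X).primeFactorsList.length, hqprime.prime,
    Nat.pos_of_ne_zero hlen, hpow.symm⟩
end

section
/- Let P and P' be projective planes and let f = (π, λ) be an epimorphism from P onto P', i.e., π maps points of P onto points of P', λ maps lines of P onto lines of P', both π and λ are surjective, and whenever a point p is incident with a line M in P, the point π(p) is incident with the line λ(M) in P'. Then either π and λ are both bijective, or every fiber of π and every fiber of λ is infinite. -/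
/-!
Call the points of a line `M` lying over a point `v'` of `lam M` a fibre on `M`, and dually the
lines through `x` lying over a line through `π x`. Whenever `π x ≠ v'` lie on a line `C' ≠ lam M`,
intersecting with `M` matches the lines through `x` over `C'` with the points of `M` over `v'`.
Chaining such matchings, all these fibres have one common size `c`. If some fibre `π ⁻¹' {z'}` is
finite, it is covered by the `c` lines through a point `g ∉ π ⁻¹' {z'}` over a line through `z'`,
so it has at most `c²` points; on the other hand the `2c` lines through one of its points `s` over
two lines through `z'` meet pairwise only in `s` and carry `2c(c - 1) + 1` of its points. Hence
`c = 1` and `π` is injective; injectivity of `π` forces that of `lam`, and everything dualises.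
-/

open Function Set

namespace IsProjectivePlane

variable {P L : Type*} {I : P → L → Prop}

theorem line_eq (h : IsProjectivePlane I) {p q : P} {M N : L} (hpq : p ≠ q)
    (hpM : I p M) (hqM : I q M) (hpN : I p N) (hqN : I q N) : M = N :=
  (h.line_unique p q hpq).unique ⟨hpM, hqM⟩ ⟨hpN, hqN⟩

theorem point_eq (h : IsProjectivePlane I) {M N : L} {p q : P} (hMN : M ≠ N)
    (hpM : I p M) (hpN : I p N) (hqM : I q M) (hqN : I q N) : p = q :=
  (h.point_unique M N hMN).unique ⟨hpM, hpN⟩ ⟨hqM, hqN⟩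

/-- The sides `ab, bc, cd, da` of a quadrangle `abcd` form a quadrilateral. -/
theorem dual (h : IsProjectivePlane I) : IsProjectivePlane (flip I) where
  line_unique := h.point_unique
  point_unique := h.line_unique
  nondeg := by
    obtain ⟨a, b, c, d, hab, hac, had, hbc, hbd, hcd, hcol⟩ := h.nondeg
    obtain ⟨A, ⟨haA, hbA⟩, -⟩ := h.line_unique a b hab
    obtain ⟨B, ⟨hbB, hcB⟩, -⟩ := h.line_unique b c hbc
    obtain ⟨C, ⟨hcC, hdC⟩, -⟩ := h.line_unique c d hcd
    obtain ⟨D, ⟨hdD, haD⟩, -⟩ := h.line_unique d a had.symm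
    have hcA : ¬ I c A := fun hc => (hcol A).1 ⟨haA, hbA, hc⟩
    have hdA : ¬ I d A := fun hd => (hcol A).2.1 ⟨haA, hbA, hd⟩
    have haB : ¬ I a B := fun ha => (hcol B).1 ⟨ha, hbB, hcB⟩
    have hdB : ¬ I d B := fun hd => (hcol B).2.2.2 ⟨hbB, hcB, hd⟩
    have haC : ¬ I a C := fun ha => (hcol C).2.2.1 ⟨ha, hcC, hdC⟩
    have hbC : ¬ I b C := fun hb => (hcol C).2.2.2 ⟨hb, hcC, hdC⟩
    have hbD : ¬ I b D := fun hb => (hcol D).2.1 ⟨haD, hb, hdD⟩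
    have hcD : ¬ I c D := fun hc => (hcol D).2.2.1 ⟨haD, hc, hdD⟩
    have hAB : A ≠ B := fun e => hcA (e ▸ hcB)
    have hBC : B ≠ C := fun e => hdB (e ▸ hdC)
    have hCD : C ≠ D := fun e => haC (e ▸ haD)
    have hAD : A ≠ D := fun e => hdA (e ▸ hdD)
    refine ⟨A, B, C, D, hAB, fun e => hcA (e ▸ hcC), hAD, hBC, fun e => haB (e ▸ haD), hCD,
      fun x => ⟨?_, ?_, ?_, ?_⟩⟩
    · rintro ⟨hxA, hxB, hxC⟩
      exact hbC (h.point_eq hAB hxA hxB hbA hbB ▸ hxC)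
    · rintro ⟨hxA, hxB, hxD⟩
      exact hbD (h.point_eq hAB hxA hxB hbA hbB ▸ hxD)
    · rintro ⟨hxA, hxC, hxD⟩
      exact hdA (h.point_eq hCD hxC hxD hdC hdD ▸ hxA)
    · rintro ⟨hxB, hxC, hxD⟩
      exact hcD (h.point_eq hBC hxB hxC hcB hcC ▸ hxD)

/-- Projecting three lines through a point `u` off `M` gives three points of `M`. -/
theorem exists_incident_ne_ne_of_not_incident (h : IsProjectivePlane I) {M : L} {u v w t : P}
    (hu : ¬ I u M) (huv : u ≠ v) (huw : u ≠ w) (hut : u ≠ t)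
    (hvw : ∀ N, ¬(I u N ∧ I v N ∧ I w N)) (hvt : ∀ N, ¬(I u N ∧ I v N ∧ I t N))
    (hwt : ∀ N, ¬(I u N ∧ I w N ∧ I t N)) (a b : P) : ∃ x, I x M ∧ x ≠ a ∧ x ≠ b := by
  obtain ⟨V, ⟨huV, hvV⟩, -⟩ := h.line_unique u v huv
  obtain ⟨W, ⟨huW, hwW⟩, -⟩ := h.line_unique u w huw
  obtain ⟨T, ⟨huT, htT⟩, -⟩ := h.line_unique u t hut
  have hne : ∀ {N : L}, I u N → N ≠ M := fun huN e => hu (e ▸ huN)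
  obtain ⟨x, ⟨hxV, hxM⟩, -⟩ := h.point_unique V M (hne huV)
  obtain ⟨y, ⟨hyW, hyM⟩, -⟩ := h.point_unique W M (hne huW)
  obtain ⟨z, ⟨hzT, hzM⟩, -⟩ := h.point_unique T M (hne huT)
  have hux : ∀ {x : P}, I x M → u ≠ x := fun hxM e => hu (e ▸ hxM)
  have hxy : x ≠ y := by
    rintro rfl
    exact hvw V ⟨huV, hvV, h.line_eq (hux hxM) huW hyW huV hxV ▸ hwW⟩
  have hxz : x ≠ z := by
    rintro rfl
    exact hvt V ⟨huV, hvV, h.line_eq (hux hxM) huT hzT huV hxV ▸ htT⟩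
  have hyz : y ≠ z := by
    rintro rfl
    exact hwt W ⟨huW, hwW, h.line_eq (hux hyM) huT hzT huW hyW ▸ htT⟩
  by_cases hx : x ≠ a ∧ x ≠ b
  · exact ⟨x, hxM, hx⟩
  by_cases hy : y ≠ a ∧ y ≠ b
  · exact ⟨y, hyM, hy⟩
  exact ⟨z, hzM, by grind⟩

theorem exists_incident_ne_ne (h : IsProjectivePlane I) (M : L) (a b : P) :
    ∃ x, I x M ∧ x ≠ a ∧ x ≠ b := by
  obtain ⟨p, q, r, s, hpq, hpr, hps, hqr, hqs, hrs, hcol⟩ := h.nondeg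
  by_cases hp : I p M
  · by_cases hq : I q M
    · have hr : ¬ I r M := fun hr => (hcol M).1 ⟨hp, hq, hr⟩
      exact h.exists_incident_ne_ne_of_not_incident hr hpr.symm hqr.symm hrs
        (fun N => by have := hcol N; tauto) (fun N => by have := hcol N; tauto)
        (fun N => by have := hcol N; tauto) a b
    · exact h.exists_incident_ne_ne_of_not_incident hq hpq.symm hqr hqs
        (fun N => by have := hcol N; tauto) (fun N => by have := hcol N; tauto)
        (fun N => by have := hcol N; tauto) a b
  · exact h.exists_incident_ne_ne_of_not_incident hp hpq hpr hps
      (fun N => (hcol N).1) (fun N => (hcol N).2.1) (fun N => (hcol N).2.2.1) a b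

theorem exists_incident (h : IsProjectivePlane I) (p : P) : ∃ M, I p M := by
  obtain ⟨a, b, -, -, hab, -⟩ := h.nondeg
  rcases eq_or_ne p a with rfl | hpa
  · obtain ⟨M, ⟨hpM, -⟩, -⟩ := h.line_unique p b hab
    exact ⟨M, hpM⟩
  · obtain ⟨M, ⟨hpM, -⟩, -⟩ := h.line_unique p a hpa
    exact ⟨M, hpM⟩

theorem exists_not_incident (h : IsProjectivePlane I) (M : L) : ∃ u, ¬ I u M := by
  obtain ⟨t, htM⟩ := h.dual.exists_incident M
  obtain ⟨D, htD, hDM, -⟩ := h.dual.exists_incident_ne_ne t M M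
  obtain ⟨u, huD, hut, -⟩ := h.exists_incident_ne_ne D t t
  exact ⟨u, fun huM => hDM (h.line_eq hut huD htD huM htM)⟩

theorem exists_not_incident_not_incident (h : IsProjectivePlane I) (M N : L) :
    ∃ x, ¬ I x M ∧ ¬ I x N := by
  obtain ⟨u, huM⟩ := h.exists_not_incident M
  by_cases huN : I u N
  · obtain ⟨D, huD, hDN, -⟩ := h.dual.exists_incident_ne_ne u N N
    have hDM : D ≠ M := fun e => huM (e ▸ huD)
    obtain ⟨y, ⟨hyD, hyM⟩, -⟩ := h.point_unique D M hDM
    obtain ⟨x, hxD, hxu, hxy⟩ := h.exists_incident_ne_ne D u y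
    exact ⟨x, fun hxM => hxy (h.point_eq hDM hxD hxM hyD hyM),
      fun hxN => hxu (h.point_eq hDN hxD hxN huD huN)⟩
  · exact ⟨u, huM, huN⟩

end IsProjectivePlane

theorem Set.encard_eq_of_forall_existsUnique {α β : Type*} {s : Set α} {t : Set β}
    (r : α → β → Prop) (h₁ : ∀ a ∈ s, ∃! b, b ∈ t ∧ r a b) (h₂ : ∀ b ∈ t, ∃! a, a ∈ s ∧ r a b) :
    s.encard = t.encard := by
  rcases s.eq_empty_or_nonempty with rfl | ⟨a₀, ha₀⟩
  · rw [eq_empty_of_forall_notMem fun b hb => (h₂ b hb).exists.elim fun _ ha => ha.1,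
      encard_empty, encard_empty]
  obtain ⟨b₀, -⟩ := (h₁ a₀ ha₀).exists
  have : Nonempty β := ⟨b₀⟩
  choose! g hg using fun a ha => (h₁ a ha).exists
  have hbij : BijOn g s t := by
    refine ⟨fun a ha => (hg a ha).1, fun a ha a' ha' e => ?_, fun b hb => ?_⟩
    · exact (h₂ (g a) (hg a ha).1).unique ⟨ha, (hg a ha).2⟩ ⟨ha', e ▸ (hg a' ha').2⟩
    · obtain ⟨a, ⟨ha, hab⟩, -⟩ := h₂ b hb
      exact ⟨a, ha, (h₁ a ha).unique (hg a ha) ⟨hb, hab⟩⟩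
  rw [← hbij.image_eq, hbij.injOn.encard_image]

theorem Set.Finite.finsum_mem_const_eq_encard_mul {ι : Type*} {t : Set ι} (ht : t.Finite)
    (c : ℕ∞) : ∑ᶠ i ∈ t, c = t.encard * c := by
  rw [finsum_mem_eq_finite_toFinset_sum _ ht, Finset.sum_const, nsmul_eq_mul,
    ht.encard_eq_coe_toFinset_card]

theorem Set.Finite.encard_biUnion_le_mul {ι α : Type*} {t : Set ι} (ht : t.Finite)
    {s : ι → Set α} {c : ℕ∞} (hs : ∀ i ∈ t, (s i).encard = c) :
    (⋃ i ∈ t, s i).encard ≤ t.encard * c := by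
  rw [← ht.finsum_mem_const_eq_encard_mul, ← finsum_mem_congr rfl hs]
  exact ht.encard_biUnion_le s

theorem Set.Finite.encard_biUnion_eq_mul {ι α : Type*} {t : Set ι} (ht : t.Finite)
    {s : ι → Set α} {c : ℕ∞} (hd : t.PairwiseDisjoint s) (hs : ∀ i ∈ t, (s i).encard = c) :
    (⋃ i ∈ t, s i).encard = t.encard * c := by
  rw [← ht.finsum_mem_const_eq_encard_mul, ← finsum_mem_congr rfl hs]
  exact ht.encard_biUnion hd

/-- For the dual incidence, `fiberOn (flip I) lam x C'` is the set of lines through `x` over `C'`. -/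
def fiberOn {P L P' : Type*} (I : P → L → Prop) (π : P → P') (M : L) (v' : P') : Set P :=
  {p | I p M ∧ π p = v'}

structure IsPlaneEpimorphism {P L P' L' : Type*} (I : P → L → Prop) (I' : P' → L' → Prop)
    (π : P → P') (lam : L → L') : Prop where
  source : IsProjectivePlane I
  target : IsProjectivePlane I'
  surjective_point : Surjective π
  surjective_line : Surjective lam
  map_incident : ∀ p M, I p M → I' (π p) (lam M)

namespace IsPlaneEpimorphism

variable {P L P' L' : Type*} {I : P → L → Prop} {I' : P' → L' → Prop} {π : P → P'} {lam : L → L'}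

theorem dual (f : IsPlaneEpimorphism I I' π lam) :
    IsPlaneEpimorphism (flip I) (flip I') lam π :=
  ⟨f.source.dual, f.target.dual, f.surjective_line, f.surjective_point,
    fun M p => f.map_incident p M⟩

theorem nonempty_fiberOn (f : IsPlaneEpimorphism I I' π lam) {M : L} {v' : P'}
    (hv : I' v' (lam M)) : (fiberOn I π M v').Nonempty := by
  obtain ⟨N', hvN, hNM, -⟩ := f.target.dual.exists_incident_ne_ne v' (lam M) (lam M)
  obtain ⟨N, rfl⟩ := f.surjective_line N'
  obtain ⟨p, ⟨hpN, hpM⟩, -⟩ := f.source.point_unique N M fun e => hNM (e ▸ rfl)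
  exact ⟨p, hpM, f.target.point_eq hNM (f.map_incident p N hpN) (f.map_incident p M hpM) hvN hv⟩

/-- The lines through `x` over `C'` correspond to the points of `M` over `v'`:
`N ↦ N ∩ M`, with inverse `p ↦ xp`. -/
theorem encard_fiberOn_flip_eq_of_ne (f : IsPlaneEpimorphism I I' π lam) {x : P} {C' : L'}
    {M : L} {v' : P'} (hMC : lam M ≠ C') (hvM : I' v' (lam M)) (hvC : I' v' C')
    (hxC : I' (π x) C') (hxv : π x ≠ v') :
    (fiberOn (flip I) lam x C').encard = (fiberOn I π M v').encard := by
  refine encard_eq_of_forall_existsUnique (fun N p => I p N) ?_ ?_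
  · rintro N ⟨hxN, rfl⟩
    obtain ⟨p, ⟨hpN, hpM⟩, hp⟩ := f.source.point_unique N M fun e => hMC (e ▸ rfl)
    refine ⟨p, ⟨⟨hpM, f.target.point_eq hMC.symm (f.map_incident p N hpN)
      (f.map_incident p M hpM) hvC hvM⟩, hpN⟩, ?_⟩
    rintro q ⟨⟨hqM, -⟩, hqN⟩
    exact hp q ⟨hqN, hqM⟩
  · rintro p ⟨hpM, rfl⟩
    obtain ⟨N, ⟨hxN, hpN⟩, hN⟩ := f.source.line_unique x p fun e => hxv (e ▸ rfl)
    refine ⟨N, ⟨⟨hxN, f.target.line_eq hxv (f.map_incident x N hxN) (f.map_incident p N hpN)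
      hxC hvC⟩, hpN⟩, ?_⟩
    rintro N' ⟨⟨hxN', -⟩, hpN'⟩
    exact hN N' ⟨hxN', hpN'⟩

theorem encard_fiberOn_eq_of_incident (f : IsPlaneEpimorphism I I' π lam) {v' : P'}
    {M₁ M₂ : L} (h₁ : I' v' (lam M₁)) (h₂ : I' v' (lam M₂)) :
    (fiberOn I π M₁ v').encard = (fiberOn I π M₂ v').encard := by
  obtain ⟨x', hx₁, hx₂⟩ := f.target.exists_not_incident_not_incident (lam M₁) (lam M₂)
  have hxv : x' ≠ v' := fun e => hx₁ (e ▸ h₁)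
  obtain ⟨C', ⟨hxC, hvC⟩, -⟩ := f.target.line_unique x' v' hxv
  obtain ⟨x, rfl⟩ := f.surjective_point x'
  rw [← f.encard_fiberOn_flip_eq_of_ne (fun e => hx₁ (e ▸ hxC)) h₁ hvC hxC hxv,
    f.encard_fiberOn_flip_eq_of_ne (fun e => hx₂ (e ▸ hxC)) h₂ hvC hxC hxv]

theorem encard_fiberOn_eq (f : IsPlaneEpimorphism I I' π lam) {v' w' : P'} {M N : L}
    (hv : I' v' (lam M)) (hw : I' w' (lam N)) :
    (fiberOn I π M v').encard = (fiberOn I π N w').encard := by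
  rcases eq_or_ne v' w' with rfl | hvw
  · exact f.encard_fiberOn_eq_of_incident hv hw
  obtain ⟨J', ⟨hvJ, hwJ⟩, -⟩ := f.target.line_unique v' w' hvw
  obtain ⟨x', hxJ, hxv, hxw⟩ := f.target.exists_incident_ne_ne J' v' w'
  obtain ⟨x, rfl⟩ := f.surjective_point x'
  obtain ⟨V', hvV, hVJ, -⟩ := f.target.dual.exists_incident_ne_ne v' J' J'
  obtain ⟨W', hwW, hWJ, -⟩ := f.target.dual.exists_incident_ne_ne w' J' J'
  obtain ⟨V, rfl⟩ := f.surjective_line V'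
  obtain ⟨W, rfl⟩ := f.surjective_line W'
  calc (fiberOn I π M v').encard = (fiberOn I π V v').encard :=
        f.encard_fiberOn_eq_of_incident hv hvV
    _ = (fiberOn (flip I) lam x J').encard :=
        (f.encard_fiberOn_flip_eq_of_ne hVJ hvV hvJ hxJ hxv).symm
    _ = (fiberOn I π W w').encard := f.encard_fiberOn_flip_eq_of_ne hWJ hwW hwJ hxJ hxw
    _ = (fiberOn I π N w').encard := f.encard_fiberOn_eq_of_incident hwW hw

theorem encard_fiberOn_flip_eq (f : IsPlaneEpimorphism I I' π lam) {x : P} {C' : L'}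
    {v' : P'} {M : L} (hx : I' (π x) C') (hv : I' v' (lam M)) :
    (fiberOn (flip I) lam x C').encard = (fiberOn I π M v').encard := by
  obtain ⟨w', hwC, hwx, -⟩ := f.target.exists_incident_ne_ne C' (π x) (π x)
  obtain ⟨D', hwD, hDC, -⟩ := f.target.dual.exists_incident_ne_ne w' C' C'
  obtain ⟨D, rfl⟩ := f.surjective_line D'
  rw [f.encard_fiberOn_flip_eq_of_ne hDC hwD hwC hx hwx.symm, f.encard_fiberOn_eq hwD hv]

theorem encard_preimage_singleton_le (f : IsPlaneEpimorphism I I' π lam) {z' : P'} {n : ℕ}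
    (hF : ∀ M, I' z' (lam M) → (fiberOn I π M z').encard = n + 1)
    (hK : ∀ x C', I' (π x) C' → (fiberOn (flip I) lam x C').encard = n + 1) :
    (π ⁻¹' {z'}).encard ≤ (n + 1) * (n + 1) := by
  obtain ⟨L', hzL⟩ := f.target.exists_incident z'
  obtain ⟨g', hgL, hgz, -⟩ := f.target.exists_incident_ne_ne L' z' z'
  obtain ⟨g, rfl⟩ := f.surjective_point g'
  set K := fiberOn (flip I) lam g L'
  have hKcard : K.encard = n + 1 := hK g L' hgL
  have hKfin : K.Finite := finite_of_encard_eq_coe (k := n + 1) (by rw [hKcard]; norm_cast)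
  have hcover : π ⁻¹' {z'} ⊆ ⋃ D ∈ K, fiberOn I π D z' := by
    intro s (hs : π s = z')
    obtain ⟨D, ⟨hgD, hsD⟩, -⟩ := f.source.line_unique g s fun e => hgz (e ▸ hs)
    have hDL : lam D = L' := f.target.line_eq hgz (f.map_incident g D hgD)
      (hs ▸ f.map_incident s D hsD) hgL hzL
    exact mem_biUnion (x := D) ⟨hgD, hDL⟩ ⟨hsD, hs⟩
  calc (π ⁻¹' {z'}).encard ≤ (⋃ D ∈ K, fiberOn I π D z').encard := encard_le_encard hcover
    _ ≤ K.encard * (n + 1) := hKfin.encard_biUnion_le_mul fun D hD => hF D (hD.2 ▸ hzL)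
    _ = (n + 1) * (n + 1) := by rw [hKcard]

theorem le_encard_preimage_singleton (f : IsPlaneEpimorphism I I' π lam) {z' : P'} {n : ℕ}
    (hF : ∀ M, I' z' (lam M) → (fiberOn I π M z').encard = n + 1)
    (hK : ∀ x C', I' (π x) C' → (fiberOn (flip I) lam x C').encard = n + 1) :
    2 * (n + 1) * n + 1 ≤ (π ⁻¹' {z'}).encard := by
  obtain ⟨L₁, hzL₁⟩ := f.target.exists_incident z'
  obtain ⟨L₂, hzL₂, hL₂₁, -⟩ := f.target.dual.exists_incident_ne_ne z' L₁ L₁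
  obtain ⟨s, rfl⟩ := f.surjective_point z'
  set K := fiberOn (flip I) lam s L₁ ∪ fiberOn (flip I) lam s L₂
  have hsK : ∀ A ∈ K, I s A := fun A hA => hA.elim And.left And.left
  have hKcard : K.encard = 2 * (n + 1) := by
    rw [encard_union_eq (disjoint_left.2 fun A h₁ h₂ => hL₂₁ (h₂.2.symm.trans h₁.2)),
      hK s L₁ hzL₁, hK s L₂ hzL₂, two_mul]
  have hKfin : K.Finite := finite_of_encard_eq_coe (k := 2 * (n + 1)) (by rw [hKcard]; norm_cast)
  have hpieces : ∀ A ∈ K, (fiberOn I π A (π s) \ {s}).encard = n := by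
    intro A hA
    have hsA : s ∈ fiberOn I π A (π s) := ⟨hsK A hA, rfl⟩
    have hsA' : I' (π s) (lam A) := f.map_incident s A (hsK A hA)
    have := encard_sdiff_singleton_add_one hsA
    rw [hF A hsA'] at this
    exact WithTop.add_right_cancel ENat.one_ne_top this
  have hdisj : K.PairwiseDisjoint fun A => fiberOn I π A (π s) \ {s} := by
    intro A hA B hB hAB
    refine disjoint_left.2 ?_
    rintro p ⟨⟨hpA, -⟩, hps⟩ ⟨⟨hpB, -⟩, -⟩
    exact hps (f.source.point_eq hAB hpA hpB (hsK A hA) (hsK B hB))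
  have hsub : (⋃ A ∈ K, fiberOn I π A (π s) \ {s}) ⊆ π ⁻¹' {π s} \ {s} := by
    simp only [iUnion_subset_iff]
    rintro A - p ⟨⟨-, hp⟩, hps⟩
    exact ⟨hp, hps⟩
  calc 2 * (n + 1) * n + 1 = (⋃ A ∈ K, fiberOn I π A (π s) \ {s}).encard + 1 := by
        rw [hKfin.encard_biUnion_eq_mul hdisj hpieces, hKcard]
    _ ≤ (π ⁻¹' {π s} \ {s}).encard + 1 := by gcongr
    _ = (π ⁻¹' {π s}).encard := encard_sdiff_singleton_add_one rfl

theorem encard_fiberOn_eq_one (f : IsPlaneEpimorphism I I' π lam) {z' : P'}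
    (hz : (π ⁻¹' {z'}).Finite) {v' : P'} {M : L} (hv : I' v' (lam M)) :
    (fiberOn I π M v').encard = 1 := by
  obtain ⟨L₀, hzL₀⟩ := f.target.exists_incident z'
  obtain ⟨M₀, rfl⟩ := f.surjective_line L₀
  obtain ⟨n, hn⟩ : ∃ n : ℕ, (fiberOn I π M₀ z').encard = n + 1 := by
    have hfin : (fiberOn I π M₀ z').Finite := hz.subset fun p hp => hp.2
    obtain ⟨m, hm⟩ := ENat.ne_top_iff_exists.mp (encard_ne_top_iff.mpr hfin)
    rcases m with _ | n
    · exact absurd (hm.symm.trans Nat.cast_zero) (encard_ne_zero.mpr (f.nonempty_fiberOn hzL₀))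
    · exact ⟨n, by rw [← hm]; push_cast; rfl⟩
  have hF : ∀ M, I' z' (lam M) → (fiberOn I π M z').encard = n + 1 :=
    fun M h => (f.encard_fiberOn_eq h hzL₀).trans hn
  have hK : ∀ x C', I' (π x) C' → (fiberOn (flip I) lam x C').encard = n + 1 :=
    fun x C' h => (f.encard_fiberOn_flip_eq h hzL₀).trans hn
  have hn0 : n = 0 := by
    have := (f.le_encard_preimage_singleton hF hK).trans (f.encard_preimage_singleton_le hF hK)
    norm_cast at this
    nlinarith
  rw [f.encard_fiberOn_eq hv hzL₀, hn, hn0]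
  rfl

theorem injective_of_finite_preimage (f : IsPlaneEpimorphism I I' π lam) {z' : P'}
    (hz : (π ⁻¹' {z'}).Finite) : Injective π := by
  intro p q hpq
  by_contra hne
  obtain ⟨J, ⟨hpJ, hqJ⟩, -⟩ := f.source.line_unique p q hne
  have hJ := (f.encard_fiberOn_eq_one hz (f.map_incident p J hpJ)).le
  exact hne (encard_le_one_iff.mp hJ p q ⟨hpJ, rfl⟩ ⟨hqJ, hpq.symm⟩)

/-- A point of `lam M` other than `π (M ∩ N)` lifts to both `M` and `N`; injectivity of `π`
makes the lifts coincide, forcing them to be `M ∩ N`. -/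
theorem injective_line_of_injective_point (f : IsPlaneEpimorphism I I' π lam)
    (hπ : Injective π) : Injective lam := by
  intro M N hMN
  by_contra hne
  obtain ⟨x, ⟨hxM, hxN⟩, -⟩ := f.source.point_unique M N hne
  obtain ⟨v', hvM, hvx, -⟩ := f.target.exists_incident_ne_ne (lam M) (π x) (π x)
  obtain ⟨p, hpM, hpv⟩ := f.nonempty_fiberOn hvM
  obtain ⟨q, hqN, hqv⟩ := f.nonempty_fiberOn (hMN ▸ hvM)
  have hpq : p = q := hπ (hpv.trans hqv.symm)
  exact hvx (hpv ▸ congrArg π (f.source.point_eq hne hpM (hpq ▸ hqN) hxM hxN))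

end IsPlaneEpimorphism

/-- Skornjakov–Hughes–Pasini: an epimorphism between projective planes is either an
isomorphism (both maps are bijective) or all of its point-fibers and line-fibers are
infinite. -/
theorem epimorphism_bijective_or_fibers_infinite {P L P' L' : Type*}
    (I : P → L → Prop) (I' : P' → L' → Prop)
    (hplane : IsProjectivePlane I) (hplane' : IsProjectivePlane I')
    (π : P → P') (lam : L → L')
    (hπ : Function.Surjective π) (hlam : Function.Surjective lam)
    (hinc : ∀ p M, I p M → I' (π p) (lam M)) :
    (Function.Bijective π ∧ Function.Bijective lam) ∨
      ((∀ p' : P', (π ⁻¹' {p'}).Infinite) ∧ (∀ M' : L', (lam ⁻¹' {M'}).Infinite)) := by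
  have f : IsPlaneEpimorphism I I' π lam := ⟨hplane, hplane', hπ, hlam, hinc⟩
  by_cases hinj : Injective π
  · exact Or.inl ⟨⟨hinj, hπ⟩, f.injective_line_of_injective_point hinj, hlam⟩
  · have hinj' : ¬ Injective lam := fun h => hinj (f.dual.injective_line_of_injective_point h)
    exact Or.inr ⟨fun z' hz => hinj (f.injective_of_finite_preimage hz),
      fun M' hM => hinj' (f.dual.injective_of_finite_preimage hM)⟩
end

section
/- Let N ≥ 2 be a natural number such that both N and N+1 are prime powers. Then one of N, N+1 is a power of 2; moreover, if (N, N+1) ≠ (8, 9), then either N is a power of 2 and N+1 is a prime number, or N+1 is a power of 2 and N is a prime number. -/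
/-- If `p` is an odd prime and `p ^ k + 1 = 2 ^ a`, then `k = 1`. -/
lemma aux_mersenne (p k a : ℕ) (hp : p.Prime) (hodd : Odd p) (hk : 0 < k)
    (h : p ^ k + 1 = 2 ^ a) : k = 1 := by
  have hp3 : 3 ≤ p := by
    rcases hodd with ⟨t, ht⟩
    have := hp.two_le
    omega
  rcases Nat.even_or_odd k with hke | hko
  · -- k even: p^k + 1 ≡ 2 mod 4, impossible
    exfalso
    obtain ⟨j, hj⟩ := hke
    obtain ⟨t, ht⟩ := hodd.pow (n := j)
    have hval : p ^ k = (2 * t + 1) * (2 * t + 1) := by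
      rw [hj, pow_add, ← ht]
    have hval2 : p ^ k = 4 * (t * t) + 4 * t + 1 := by rw [hval]; ring
    rw [hval2] at h
    have ht1 : 1 ≤ t := by
      have h3 : 3 ≤ p ^ j := by
        calc 3 ≤ p := hp3
        _ = p ^ 1 := (pow_one p).symm
        _ ≤ p ^ j := Nat.pow_le_pow_right (by omega) (by omega)
      rw [ht] at h3; omega
    have ha2 : 2 ≤ a := by
      by_contra hc
      push_neg at hc
      interval_cases a <;> omega
    have hdvd : (4 : ℕ) ∣ 2 ^ a := by
      have : (2:ℕ) ^ 2 ∣ 2 ^ a := Nat.pow_dvd_pow 2 ha2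
      simpa using this
    obtain ⟨w, hw⟩ := hdvd
    rw [hw] at h
    omega
  · -- k odd
    have hdvd : p + 1 ∣ p ^ k + 1 := by
      have := hko.nat_add_dvd_pow_add_pow p 1
      simpa using this
    rw [h] at hdvd
    obtain ⟨b, hba, hb⟩ := (Nat.dvd_prime_pow Nat.prime_two).mp hdvd
    have hb2 : 2 ≤ b := by
      by_contra hc
      push_neg at hc
      interval_cases b <;> omega
    obtain ⟨c, rfl⟩ : ∃ c, b = c + 2 := ⟨b - 2, by omega⟩
    have hpz : (p : ℤ) = 2 ^ (c + 2) - 1 := by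
      have : ((p : ℤ) + 1) = 2 ^ (c + 2) := by exact_mod_cast hb
      linarith
    have hab : a ≤ c + 2 := by
      by_contra hcc
      push_neg at hcc
      obtain ⟨j, hjk⟩ := hko
      have hd : ((2:ℤ) ^ (c + 3)) ∣ (p:ℤ) ^ 2 - 1 := ⟨2 ^ (c + 1) - 1, by rw [hpz]; ring⟩
      have hpsq : ((p:ℤ) ^ 2) ≡ 1 [ZMOD (2:ℤ) ^ (c + 3)] :=
        (Int.ModEq.symm (Int.modEq_iff_dvd.mpr (by simpa using hd)))
      have hpk : ((p:ℤ) ^ k) ≡ (p:ℤ) [ZMOD (2:ℤ) ^ (c + 3)] := by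
        calc (p:ℤ) ^ k = ((p:ℤ) ^ 2) ^ j * p := by rw [hjk]; ring
        _ ≡ 1 ^ j * p [ZMOD (2:ℤ) ^ (c + 3)] := (hpsq.pow j).mul_right p
        _ = p := by ring
      have hdvd1 : ((2:ℤ) ^ (c + 3)) ∣ (p:ℤ) ^ k + 1 := by
        have h2 : ((2:ℕ) ^ (c + 3)) ∣ 2 ^ a := Nat.pow_dvd_pow 2 (by omega)
        rw [← h] at h2
        exact_mod_cast h2
      have h' : ((2:ℤ) ^ (c + 3)) ∣ ((p:ℤ) ^ k + 1) - ((p:ℤ) + 1) :=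
        (hpk.add_right 1).symm.dvd
      have hdvd2 : ((2:ℤ) ^ (c + 3)) ∣ (p:ℤ) + 1 := by
        have heq : (p:ℤ) + 1 = ((p:ℤ) ^ k + 1) - (((p:ℤ) ^ k + 1) - ((p:ℤ) + 1)) := by ring
        rw [heq]
        exact dvd_sub hdvd1 h'
      have hd3 : ((2:ℤ) ^ (c + 3)) ∣ (2:ℤ) ^ (c + 2) := by
        rw [hpz] at hdvd2
        simpa using hdvd2
      have hle := Int.le_of_dvd (by positivity) hd3
      have : (2:ℤ) ^ (c + 2) < 2 ^ (c + 3) := by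
        apply pow_lt_pow_right₀ (by norm_num) (by omega)
      linarith
    have h2le : 2 ^ a ≤ 2 ^ (c + 2) := Nat.pow_le_pow_right (by omega) hab
    have hfin : p ^ k + 1 ≤ p + 1 := by
      rw [h, hb]
      exact h2le
    have hple : p ^ k ≤ p ^ 1 := by
      rw [pow_one]
      exact Nat.lt_succ_iff.mp hfin
    have := (Nat.pow_le_pow_iff_right (by omega : 2 ≤ p)).mp hple
    omega

/-- If `p` is an odd prime and `p ^ k = 2 ^ a + 1`, then `k = 1` or `(p,k,a) = (3,2,3)`. -/
lemma aux_fermat (p k a : ℕ) (hp : p.Prime) (hodd : Odd p) (hk : 0 < k)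
    (h : p ^ k = 2 ^ a + 1) : k = 1 ∨ (p = 3 ∧ k = 2 ∧ a = 3) := by
  have hp3 : 3 ≤ p := by
    rcases hodd with ⟨t, ht⟩
    have := hp.two_le
    omega
  rcases Nat.even_or_odd k with hke | hko
  · -- k even: exceptional Catalan case
    right
    obtain ⟨j, hj⟩ := hke
    have hj0 : 0 < j := by omega
    obtain ⟨q, hq'⟩ : ∃ q, p ^ j = q := ⟨_, rfl⟩
    have hq3 : 3 ≤ q := by
      rw [← hq']
      calc 3 ≤ p := hp3
      _ = p ^ 1 := (pow_one p).symm
      _ ≤ p ^ j := Nat.pow_le_pow_right (by omega) hj0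
    have hqodd : Odd q := hq' ▸ hodd.pow
    obtain ⟨m, hm⟩ : ∃ m, q = m + 1 := ⟨q - 1, by omega⟩
    have hqq : q * q = 2 ^ a + 1 := by
      rw [← hq', ← pow_add, ← hj, h]
    obtain ⟨A, hA⟩ : ∃ A, (2:ℕ) ^ a = A := ⟨_, rfl⟩
    rw [hA] at hqq
    have hring : (m + 1) * (m + 1) = m * (m + 2) + 1 := by ring
    rw [hm] at hqq
    have hfac : A = m * (m + 2) := by omega
    have hm1 : m ∣ 2 ^ a := by
      rw [hA, hfac]; exact ⟨m + 2, rfl⟩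
    have hm2 : m + 2 ∣ 2 ^ a := by
      rw [hA, hfac]; exact ⟨m, by ring⟩
    obtain ⟨s, hsa, hs⟩ := (Nat.dvd_prime_pow Nat.prime_two).mp hm1
    obtain ⟨t, hta, ht⟩ := (Nat.dvd_prime_pow Nat.prime_two).mp hm2
    have hmev : m % 2 = 0 := by
      obtain ⟨u, hu⟩ := hqodd; omega
    have hs1 : 1 ≤ s := by
      by_contra hc
      push_neg at hc
      interval_cases s <;> omega
    have hseq : s = 1 := by
      by_contra hc
      have hs2 : 2 ≤ s := by omega
      have h4m : (4:ℕ) ∣ m := by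
        rw [hs]
        have : (2:ℕ) ^ 2 ∣ 2 ^ s := Nat.pow_dvd_pow 2 hs2
        simpa using this
      have ht2 : 2 ≤ t := by
        by_contra hc2
        push_neg at hc2
        interval_cases t <;> omega
      have h4t : (4:ℕ) ∣ m + 2 := by
        rw [ht]
        have : (2:ℕ) ^ 2 ∣ 2 ^ t := Nat.pow_dvd_pow 2 ht2
        simpa using this
      omega
    have hm2' : m = 2 := by rw [hseq, pow_one] at hs; exact hs
    have hq3' : q = 3 := by omega
    have hpj : p ^ j = 3 := hq'.trans hq3'
    have hpd : p ∣ 3 := by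
      rw [← hpj]
      exact dvd_pow_self p (by omega)
    have hp3' : p = 3 := by
      rcases (Nat.Prime.eq_one_or_self_of_dvd (by norm_num) p hpd) with h1 | h1
      · exact absurd h1 hp.ne_one
      · exact h1
    have hj1 : j = 1 := by
      rw [hp3'] at hpj
      have : (3:ℕ) ^ j = 3 ^ 1 := by simpa using hpj
      exact Nat.pow_right_injective (by norm_num) this
    have ha3 : a = 3 := by
      have : (2:ℕ) ^ a = 2 ^ 3 := by
        rw [hA, hfac, hm2']
        norm_num
      exact Nat.pow_right_injective (by norm_num) this
    exact ⟨hp3', by omega, ha3⟩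
  · -- k odd
    left
    have hdvd : p - 1 ∣ p ^ k - 1 := by
      have := Nat.sub_dvd_pow_sub_pow p 1 k
      simpa using this
    have hpk1 : p ^ k - 1 = 2 ^ a := by
      rw [h]
      simp
    rw [hpk1] at hdvd
    obtain ⟨b, hba, hb⟩ := (Nat.dvd_prime_pow Nat.prime_two).mp hdvd
    have hb1 : 1 ≤ b := by
      by_contra hc
      push_neg at hc
      interval_cases b <;> omega
    obtain ⟨c, rfl⟩ : ∃ c, b = c + 1 := ⟨b - 1, by omega⟩
    have hpn : p = 2 ^ (c + 1) + 1 := by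
      rw [← hb]
      omega
    have hpz : (p : ℤ) = 2 ^ (c + 1) + 1 := by exact_mod_cast hpn
    have hab : a ≤ c + 1 := by
      by_contra hcc
      push_neg at hcc
      obtain ⟨j, hjk⟩ := hko
      have hd : ((2:ℤ) ^ (c + 2)) ∣ (p:ℤ) ^ 2 - 1 := ⟨2 ^ c + 1, by rw [hpz]; ring⟩
      have hpsq : ((p:ℤ) ^ 2) ≡ 1 [ZMOD (2:ℤ) ^ (c + 2)] :=
        (Int.ModEq.symm (Int.modEq_iff_dvd.mpr (by simpa using hd)))
      have hpk : ((p:ℤ) ^ k) ≡ (p:ℤ) [ZMOD (2:ℤ) ^ (c + 2)] := by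
        calc (p:ℤ) ^ k = ((p:ℤ) ^ 2) ^ j * p := by rw [hjk]; ring
        _ ≡ 1 ^ j * p [ZMOD (2:ℤ) ^ (c + 2)] := (hpsq.pow j).mul_right p
        _ = p := by ring
      have hcast : ((p:ℤ)) ^ k = 2 ^ a + 1 := by exact_mod_cast h
      have hdvd1 : ((2:ℤ) ^ (c + 2)) ∣ (p:ℤ) ^ k - 1 := by
        have h2 : ((2:ℤ) ^ (c + 2)) ∣ 2 ^ a := pow_dvd_pow 2 (by omega)
        have heq : (p:ℤ) ^ k - 1 = 2 ^ a := by linarith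
        rw [heq]; exact h2
      have h' : ((2:ℤ) ^ (c + 2)) ∣ ((p:ℤ) ^ k - 1) - ((p:ℤ) - 1) :=
        (hpk.sub_right 1).symm.dvd
      have hdvd2 : ((2:ℤ) ^ (c + 2)) ∣ (p:ℤ) - 1 := by
        have heq : (p:ℤ) - 1 = ((p:ℤ) ^ k - 1) - (((p:ℤ) ^ k - 1) - ((p:ℤ) - 1)) := by ring
        rw [heq]
        exact dvd_sub hdvd1 h'
      have hd3 : ((2:ℤ) ^ (c + 2)) ∣ (2:ℤ) ^ (c + 1) := by
        rw [hpz] at hdvd2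
        simpa using hdvd2
      have hle := Int.le_of_dvd (by positivity) hd3
      have : (2:ℤ) ^ (c + 1) < 2 ^ (c + 2) := by
        apply pow_lt_pow_right₀ (by norm_num) (by omega)
      linarith
    have h2le : (2:ℕ) ^ a ≤ 2 ^ (c + 1) := Nat.pow_le_pow_right (by omega) hab
    have hple : p ^ k ≤ p ^ 1 := by
      rw [pow_one, h, hpn]
      exact Nat.add_le_add_right h2le 1
    have := (Nat.pow_le_pow_iff_right (by omega : 2 ≤ p)).mp hple
    omega

/-- If `N ≥ 2` and both `N` and `N + 1` are prime powers, then one of `N`, `N + 1`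
is a power of 2; moreover, if `(N, N + 1) ≠ (8, 9)`, then either `N` is a power of 2
and `N + 1` is prime, or `N + 1` is a power of 2 and `N` is prime. -/
theorem consecutive_prime_powers (N : ℕ) (hN : 2 ≤ N)
    (h1 : IsPrimePow N) (h2 : IsPrimePow (N + 1)) :
    ((∃ k : ℕ, N = 2 ^ k) ∨ (∃ k : ℕ, N + 1 = 2 ^ k)) ∧
    ((N, N + 1) ≠ (8, 9) →
      ((∃ k : ℕ, N = 2 ^ k) ∧ Nat.Prime (N + 1)) ∨
      ((∃ k : ℕ, N + 1 = 2 ^ k) ∧ Nat.Prime N)) := by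
  obtain ⟨p, k, hp, hk, hpk⟩ := (isPrimePow_nat_iff N).mp h1
  obtain ⟨q, l, hq, hl, hql⟩ := (isPrimePow_nat_iff (N + 1)).mp h2
  rcases Nat.even_or_odd N with hE | hO
  · -- N even, so p = 2
    have hp2 : p = 2 := by
      have h2d : 2 ∣ p ^ k := by rw [hpk]; exact hE.two_dvd
      have := Nat.Prime.dvd_of_dvd_pow Nat.prime_two h2d
      exact ((Nat.prime_dvd_prime_iff_eq Nat.prime_two hp).mp this).symm
    subst hp2
    have hq2 : q ≠ 2 := by
      rintro rfl
      have hd : 2 ∣ 2 ^ l := dvd_pow_self 2 (by omega)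
      rw [hql] at hd
      obtain ⟨u, hu⟩ := hE
      omega
    have hqodd : Odd q := hq.odd_of_ne_two hq2
    have heq : q ^ l = 2 ^ k + 1 := by rw [hql, hpk]
    rcases aux_fermat q l k hq hqodd hl heq with hl1 | ⟨hq3, hl2, hk3⟩
    · refine ⟨Or.inl ⟨k, hpk.symm⟩, fun _ => Or.inl ⟨⟨k, hpk.symm⟩, ?_⟩⟩
      rw [hl1, pow_one] at hql
      rw [← hql]
      exact hq
    · -- N = 8, N + 1 = 9
      refine ⟨Or.inl ⟨k, hpk.symm⟩, fun hne => ?_⟩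
      exfalso
      apply hne
      have h8 : N = 8 := by rw [← hpk, hk3]; norm_num
      simp [h8]
  · -- N odd, so q = 2
    have hq2 : q = 2 := by
      have h2d : 2 ∣ q ^ l := by
        rw [hql]
        obtain ⟨u, hu⟩ := hO
        omega
      have := Nat.Prime.dvd_of_dvd_pow Nat.prime_two h2d
      exact ((Nat.prime_dvd_prime_iff_eq Nat.prime_two hq).mp this).symm
    subst hq2
    have hp2 : p ≠ 2 := by
      rintro rfl
      have hd : 2 ∣ 2 ^ k := dvd_pow_self 2 (by omega)
      rw [hpk] at hd
      obtain ⟨u, hu⟩ := hO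
      omega
    have hpodd : Odd p := hp.odd_of_ne_two hp2
    have heq : p ^ k + 1 = 2 ^ l := by rw [hpk, hql]
    have hk1 := aux_mersenne p k l hp hpodd hk heq
    refine ⟨Or.inr ⟨l, hql.symm⟩, fun _ => Or.inr ⟨⟨l, hql.symm⟩, ?_⟩⟩
    rw [hk1, pow_one] at hpk
    rw [← hpk]
    exact hp
end

section
/- Let P be a finite projective plane of order N ≥ 3 and let O be an oval of P. If an automorphism (σ, τ) of P fixes every point of O (σ(p) = p for all p ∈ O), then (σ, τ) is the identity automorphism: σ fixes every point of P and τ fixes every line of P. -/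
lemma tangent_unique {P L : Type*} [Finite P] [Finite L] (I : P → L → Prop)
    (hplane : IsProjectivePlane I) (N : ℕ)
    (horder_points : ∀ p : P, Nat.card {M : L // I p M} = N + 1)
    (O : Set P) (hOcard : Nat.card O = N + 1)
    (hOarc : ∀ p ∈ O, ∀ q ∈ O, ∀ r ∈ O, p ≠ q → p ≠ r → q ≠ r →
      ∀ M : L, ¬(I p M ∧ I q M ∧ I r M))
    (p : P) (hp : p ∈ O) (M M' : L) (hM : I p M) (hM' : I p M')
    (htM : ∀ q ∈ O, q ≠ p → ¬ I q M) (htM' : ∀ q ∈ O, q ≠ p → ¬ I q M') :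
    M = M' := by
  by_contra hne
  have hqp : ∀ q : ↥(O \ {p}), p ≠ (q : P) := fun q h => q.2.2 (by simp [← h])
  let join : (q : ↥(O \ {p})) → {K : L // I p K ∧ I (q : P) K} := fun q =>
    ⟨(hplane.line_unique p q (hqp q)).choose,
      (hplane.line_unique p q (hqp q)).choose_spec.1⟩
  let f : ↥(O \ {p}) ⊕ Bool → {K : L // I p K} :=
    Sum.elim (fun q => ⟨(join q).1, (join q).2.1⟩)
      (fun b => if b then ⟨M, hM⟩ else ⟨M', hM'⟩)
  have hjoin : ∀ q : ↥(O \ {p}), I p (join q).1 ∧ I (q : P) (join q).1 :=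
    fun q => (join q).2
  have hsec : ∀ q₁ q₂ : ↥(O \ {p}), (join q₁).1 = (join q₂).1 → q₁ = q₂ := by
    intro q₁ q₂ heq
    by_contra hq
    have hval : (q₁ : P) ≠ (q₂ : P) := fun hv => hq (Subtype.ext hv)
    refine hOarc p hp q₁ q₁.2.1 q₂ q₂.2.1 (fun hpq => q₁.2.2 hpq.symm)
      (fun hpq => q₂.2.2 hpq.symm) hval (join q₁).1
      ⟨(hjoin q₁).1, (hjoin q₁).2, ?_⟩
    rw [heq]; exact (hjoin q₂).2
  have hnotM : ∀ q : ↥(O \ {p}), (join q).1 ≠ M := fun q hq =>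
    htM q q.2.1 q.2.2 (hq ▸ (hjoin q).2)
  have hnotM' : ∀ q : ↥(O \ {p}), (join q).1 ≠ M' := fun q hq =>
    htM' q q.2.1 q.2.2 (hq ▸ (hjoin q).2)
  have hinj : Function.Injective f := by
    intro x y h
    match x, y with
    | .inl q₁, .inl q₂ =>
      exact congrArg Sum.inl (hsec q₁ q₂ (congrArg Subtype.val h))
    | .inl q₁, .inr true => exact absurd (congrArg Subtype.val h) (hnotM q₁)
    | .inl q₁, .inr false => exact absurd (congrArg Subtype.val h) (hnotM' q₁)
    | .inr true, .inl q₂ =>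
      exact absurd (congrArg Subtype.val h).symm (hnotM q₂)
    | .inr false, .inl q₂ =>
      exact absurd (congrArg Subtype.val h).symm (hnotM' q₂)
    | .inr true, .inr true => rfl
    | .inr false, .inr false => rfl
    | .inr true, .inr false => exact absurd (congrArg Subtype.val h) hne
    | .inr false, .inr true => exact absurd (congrArg Subtype.val h).symm hne
  have hcard := Nat.card_le_card_of_injective f hinj
  rw [Nat.card_sum, horder_points] at hcard
  have hOp : Nat.card ↥(O \ {p}) = N := by
    rw [Nat.card_coe_set_eq, Set.ncard_diff_singleton_of_mem hp,
      ← Nat.card_coe_set_eq, hOcard]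
    omega
  rw [hOp, Nat.card_eq_fintype_card] at hcard
  simp at hcard

/-- Let `O` be an oval (a set of `N + 1` points, no three collinear) of a finite
projective plane of order `N ≥ 3`.  An automorphism fixing every point of `O` is the
identity automorphism. -/
theorem automorphism_fixing_oval_is_identity {P L : Type*} [Finite P] [Finite L]
    (I : P → L → Prop) (hplane : IsProjectivePlane I)
    (N : ℕ) (hN : 3 ≤ N)
    (horder_lines : ∀ M : L, Nat.card {p : P // I p M} = N + 1)
    (horder_points : ∀ p : P, Nat.card {M : L // I p M} = N + 1)
    (O : Set P) (hOcard : Nat.card O = N + 1)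
    (hOarc : ∀ p ∈ O, ∀ q ∈ O, ∀ r ∈ O, p ≠ q → p ≠ r → q ≠ r →
      ∀ M : L, ¬(I p M ∧ I q M ∧ I r M))
    (σ : Equiv.Perm P) (τ : Equiv.Perm L)
    (haut : ∀ p M, I p M ↔ I (σ p) (τ M))
    (hfix : ∀ p ∈ O, σ p = p) :
    (∀ p : P, σ p = p) ∧ (∀ M : L, τ M = M) := by
  -- incidence with oval points is preserved by τ
  have hOinc : ∀ q ∈ O, ∀ M : L, I q (τ M) ↔ I q M := by
    intro q hq M
    conv_rhs => rw [haut q M, hfix q hq]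
  -- τ fixes every line through an oval point
  have hlinefix : ∀ (M : L) (p : P), p ∈ O → I p M → τ M = M := by
    intro M p hp hpM
    have hpτ : I p (τ M) := (hOinc p hp M).2 hpM
    by_cases hsec : ∃ q ∈ O, q ≠ p ∧ I q M
    · obtain ⟨q, hq, hqp, hqM⟩ := hsec
      obtain ⟨K, -, hKuniq⟩ := hplane.line_unique p q (fun h => hqp h.symm)
      rw [hKuniq (τ M) ⟨hpτ, (hOinc q hq M).2 hqM⟩, hKuniq M ⟨hpM, hqM⟩]
    · push_neg at hsec
      exact tangent_unique I hplane N horder_points O hOcard hOarc p hp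
        (τ M) M hpτ hpM
        (fun q hq hqp hqτ => hsec q hq hqp ((hOinc q hq M).1 hqτ))
        (fun q hq hqp => hsec q hq hqp)
  -- σ fixes every point
  have hσ : ∀ x : P, σ x = x := by
    intro x
    by_cases hxO : x ∈ O
    · exact hfix x hxO
    · -- three distinct oval points
      have h2 : 2 < Nat.card O := by omega
      have hnt : Nontrivial ↥O := Finite.one_lt_card_iff_nontrivial.mp (by omega)
      obtain ⟨a, b, hab⟩ := exists_pair_ne ↥O
      have habv : (a : P) ≠ (b : P) := fun h => hab (Subtype.ext h)
      have hc : (O \ {(a : P), (b : P)}).Nonempty := by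
        apply Set.nonempty_of_ncard_ne_zero
        have h1 : (O \ {(a : P), (b : P)}).ncard
            ≥ O.ncard - ({(a : P), (b : P)} : Set P).ncard :=
          Set.le_ncard_diff _ _ (Set.toFinite _)
        have h2' : ({(a : P), (b : P)} : Set P).ncard ≤ 2 :=
          Set.ncard_insert_le _ _ |>.trans (by simp)
        have h3 : O.ncard = N + 1 := by
          rw [← Nat.card_coe_set_eq, hOcard]
        omega
      obtain ⟨c, hcO, hcab⟩ := hc
      simp only [Set.mem_insert_iff, Set.mem_singleton_iff, not_or] at hcab
      -- x is not an oval point, so x ≠ a, b, c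
      have hxa : x ≠ (a : P) := fun h => hxO (h ▸ a.2)
      have hxb : x ≠ (b : P) := fun h => hxO (h ▸ b.2)
      have hxc : x ≠ c := fun h => hxO (h ▸ hcO)
      -- join lines from x to a, b, c
      obtain ⟨Ma, hMa, -⟩ := hplane.line_unique x a hxa
      obtain ⟨Mb, hMb, -⟩ := hplane.line_unique x b hxb
      obtain ⟨Mc, hMc, -⟩ := hplane.line_unique x c hxc
      -- two of them are distinct and τ-fixed; use point uniqueness
      have key : ∀ M₁ M₂ : L, M₁ ≠ M₂ → I x M₁ → I x M₂ →
          τ M₁ = M₁ → τ M₂ = M₂ → σ x = x := by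
        intro M₁ M₂ h12 h1 h2 hf1 hf2
        obtain ⟨y, -, hyuniq⟩ := hplane.point_unique M₁ M₂ h12
        have hσx : I (σ x) M₁ ∧ I (σ x) M₂ :=
          ⟨hf1 ▸ (haut x M₁).1 h1, hf2 ▸ (haut x M₂).1 h2⟩
        rw [hyuniq (σ x) hσx, hyuniq x ⟨h1, h2⟩]
      have hfMa : τ Ma = Ma := hlinefix Ma a a.2 hMa.2
      have hfMb : τ Mb = Mb := hlinefix Mb b b.2 hMb.2
      have hfMc : τ Mc = Mc := hlinefix Mc c hcO hMc.2
      by_cases hMab : Ma = Mb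
      · -- then Ma contains a and b, so Ma ≠ Mc
        have hMac : Ma ≠ Mc := by
          intro h
          exact hOarc a a.2 b b.2 c hcO habv (fun h' => hcab.1 h'.symm)
            (fun h' => hcab.2 h'.symm) Ma
            ⟨hMa.2, hMab ▸ hMb.2, h ▸ hMc.2⟩
        exact key Ma Mc hMac hMa.1 hMc.1 hfMa hfMc
      · exact key Ma Mb hMab hMa.1 hMb.1 hfMa hfMb
  refine ⟨hσ, fun M => ?_⟩
  -- pick two distinct points on M
  have hnt : Nontrivial {p : P // I p M} :=
    Finite.one_lt_card_iff_nontrivial.mp (by rw [horder_lines M]; omega)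
  obtain ⟨x, y, hxy⟩ := exists_pair_ne {p : P // I p M}
  have hxyv : (x : P) ≠ (y : P) := fun h => hxy (Subtype.ext h)
  obtain ⟨K, -, hKuniq⟩ := hplane.line_unique x y hxyv
  have hx : I (x : P) (τ M) := by rw [← hσ x]; exact (haut x M).1 x.2
  have hy : I (y : P) (τ M) := by rw [← hσ y]; exact (haut y M).1 y.2
  rw [hKuniq (τ M) ⟨hx, hy⟩, hKuniq M ⟨x.2, y.2⟩]
end
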